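/- arXiv:2112.12587 — 8 statements merged into one kernel-verified Lean document; each statement's English description precedes it below -/
import Mathlib

section
/- Let G = ℚ/ℤ (as an additive group), let p_0 < p_1 < … enumerate the primes, and let K be the class of all subgroups of G. For choice sequences k̄ and k̄′: (1) if k̄ = k̄′ then dis(⟨k̄⟩,⟨k̄′⟩) = 0; (2) if k̄ ⪯ k̄′ and k̄ ≠ k̄′ then dis(⟨k̄⟩,⟨k̄′⟩) = 1; (3) if k̄ ≡ k̄′, k̄ ⋠ k̄′ and k̄′ ⋠ k̄, then dis(⟨k̄⟩,⟨k̄′⟩) = 2; (4) if k̄ ≢ k̄′ then dis(⟨k̄⟩,⟨k̄′⟩) = ∞. -/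
namespace QZNetwork

/-- The group `ℚ/ℤ`. -/
abbrev QZ : Type := ℚ ⧸ AddSubgroup.zmultiples (1 : ℚ)

/-- The `i`-th prime number (in increasing order). -/
noncomputable def p (i : ℕ) : ℕ := Nat.nth Nat.Prime i

/-- The subgroup `⟨k̄⟩` of `ℚ/ℤ` determined by a choice sequence `k̄ : ℕ → ℕ∞`:
it is generated by the cosets `1/p_i^j + ℤ` for all `i, j ∈ ℕ` with `j ≤ k̄ i`. -/
noncomputable def gen (k : ℕ → ℕ∞) : AddSubgroup QZ :=
  AddSubgroup.closure
    {x : QZ | ∃ i j : ℕ, (j : ℕ∞) ≤ k i ∧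
      x = QuotientAddGroup.mk ((1 : ℚ) / (p i : ℚ) ^ j)}

/-- `k̄ ≡ k̄′`: the two choice sequences have the same `∞`-positions and differ at only
finitely many positions. -/
def ceq (k k' : ℕ → ℕ∞) : Prop :=
  (∀ i, k i = ⊤ ↔ k' i = ⊤) ∧ {i : ℕ | k i ≠ k' i}.Finite

/-- `k̄ ⪯ k̄′`: `k̄ ≡ k̄′` and `k̄` is pointwise at most `k̄′`. -/
def cle (k k' : ℕ → ℕ∞) : Prop := ceq k k' ∧ ∀ i, k i ≤ k' i

/-- `A` is largely embeddable into `B` in the class of all subgroups of `ℚ/ℤ`: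
some subgroup `C ≤ B` is isomorphic to `A` and, together with one extra element of
`B`, generates `B`. -/
def LargeEmb (A B : AddSubgroup QZ) : Prop :=
  ∃ C : AddSubgroup QZ, C ≤ B ∧ Nonempty (A ≃+ C) ∧
    ∃ b ∈ B, AddSubgroup.closure (↑C ∪ {b}) = B

/-- A path of length `n` between `A` and `B` in the network of large embeddings of the
class of all subgroups of `ℚ/ℤ`. -/
def HasPath (A B : AddSubgroup QZ) (n : ℕ) : Prop :=
  ∃ C : ℕ → AddSubgroup QZ, Nonempty ((C 0) ≃+ A) ∧ Nonempty ((C n) ≃+ B) ∧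
    ∀ i < n, LargeEmb (C i) (C (i + 1)) ∨ LargeEmb (C (i + 1)) (C i)

/-- The generator distance in the class of all subgroups of `ℚ/ℤ`, in `ℕ ∪ {∞}`. -/
noncomputable def dis (A B : AddSubgroup QZ) : ℕ∞ :=
  sInf {q : ℕ∞ | ∃ n : ℕ, q = (n : ℕ∞) ∧ HasPath A B n}

end QZNetwork

/-!
A subgroup `A` of `ℚ/ℤ` is determined by its supernatural number: the sequence whose `i`-th
entry is the supremum of the `p_i`-adic valuations of the orders of the elements of `A`; for
`⟨k̄⟩` this sequence is `k̄` itself. It is an isomorphism invariant, and adjoining one element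
`b` to a subgroup raises it by at most the finitely supported sequence of valuations of the
order of `b`. So a large embedding `A ⋖ B` forces `k̄_A ⪯ k̄_B`, and every path in the network
joins `≡`-equivalent sequences. Conversely, if `k̄ ⪯ k̄′`, then `⟨k̄′⟩` is generated by `⟨k̄⟩`
and the single element `∑ 1/p_i^{k′_i}` over the finitely many `i` with `k_i ≠ k′_i`, since
each summand is a multiple of the sum (the summands have pairwise coprime orders). When
neither of `k̄, k̄′` is `⪯` the other, the path goes through `⟨k̄ ⊔ k̄′⟩`.
-/

section OrderLemmas

variable {G : Type*}

lemma addOrderOf_dvd_addOrderOf_nsmul_mul [AddMonoid G] (x : G) (n : ℕ) :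
    addOrderOf x ∣ addOrderOf (n • x) * n := by
  apply addOrderOf_dvd_of_nsmul_eq_zero
  rw [mul_comm, mul_nsmul, addOrderOf_nsmul_eq_zero]

lemma mem_zmultiples_sum_of_pairwise_coprime [AddCommGroup G] {ι : Type*} (s : Finset ι)
    (f : ι → G)
    (hf : (s : Set ι).Pairwise fun i j => (addOrderOf (f i)).Coprime (addOrderOf (f j)))
    {i : ι} (hi : i ∈ s) : f i ∈ AddSubgroup.zmultiples (∑ j ∈ s, f j) := by
  classical
  set M := ∏ j ∈ s.erase i, addOrderOf (f j)
  -- `M` kills every summand but `f i`, and is coprime to the order of `f i`.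
  have hM : M • ∑ j ∈ s, f j = M • f i := by
    rw [Finset.smul_sum, Finset.sum_eq_single_of_mem i hi]
    intro j hj hji
    exact addOrderOf_dvd_iff_nsmul_eq_zero.1
      (Finset.dvd_prod_of_mem _ (Finset.mem_erase.2 ⟨hji, hj⟩))
  have hcop : M.Coprime (addOrderOf (f i)) := Nat.Coprime.prod_left fun j hj =>
    hf (Finset.mem_of_mem_erase hj) hi (Finset.ne_of_mem_erase hj)
  obtain ⟨m, hm⟩ := exists_nsmul_eq_self_of_coprime hcop
  rw [← hm, ← hM]
  exact AddSubgroup.nsmul_mem _ (AddSubgroup.nsmul_mem _ (AddSubgroup.mem_zmultiples _) _) _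

lemma AddSubgroup.closure_coe_union_singleton [AddGroup G] (C : AddSubgroup G) (b : G) :
    AddSubgroup.closure (↑C ∪ {b}) = C ⊔ AddSubgroup.zmultiples b := by
  rw [AddSubgroup.closure_union, AddSubgroup.closure_eq, AddSubgroup.zmultiples_eq_closure]

end OrderLemmas

namespace QZNetwork

lemma p_prime (i : ℕ) : (p i).Prime := Nat.prime_nth_prime i

lemma p_injective : Function.Injective p := Nat.nth_injective Nat.infinite_setOfPred_prime

lemma coprime_p_pow {i i' : ℕ} (h : i ≠ i') (j j' : ℕ) : (p i ^ j).Coprime (p i' ^ j') :=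
  Nat.Coprime.pow _ _
    ((Nat.coprime_primes (p_prime i) (p_prime i')).2 (p_injective.ne h))

lemma ceq_refl (k : ℕ → ℕ∞) : ceq k k := ⟨fun _ => Iff.rfl, by simp⟩

lemma ceq_symm {k k' : ℕ → ℕ∞} (h : ceq k k') : ceq k' k :=
  ⟨fun i => (h.1 i).symm, by simpa only [ne_comm] using h.2⟩

lemma ceq_trans {k k' k'' : ℕ → ℕ∞} (h : ceq k k') (h' : ceq k' k'') : ceq k k'' := by
  refine ⟨fun i => (h.1 i).trans (h'.1 i), (h.2.union h'.2).subset fun i hi => ?_⟩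
  by_contra hi'
  simp only [Set.mem_union, Set.mem_ofPred_eq, not_or, not_not] at hi'
  exact hi (hi'.1.trans hi'.2)

lemma cle_refl (k : ℕ → ℕ∞) : cle k k := ⟨ceq_refl k, fun _ => le_rfl⟩

lemma cle_sup_left {k k' : ℕ → ℕ∞} (h : ceq k k') : cle k (k ⊔ k') := by
  refine ⟨⟨fun i => ?_, h.2.subset fun i hi hk => hi ?_⟩, fun i => le_sup_left⟩
  · simp only [Pi.sup_apply, max_eq_top, iff_self_or]
    exact (h.1 i).2
  · simp [hk]

lemma cle_sup_right {k k' : ℕ → ℕ∞} (h : ceq k k') : cle k' (k ⊔ k') :=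
  sup_comm k k' ▸ cle_sup_left (ceq_symm h)

lemma ceq_of_le_of_le_add {t t' : ℕ → ℕ∞} (d : ℕ → ℕ) (hd : {i | d i ≠ 0}.Finite)
    (hle : t ≤ t') (hle' : ∀ i, t' i ≤ t i + d i) : ceq t t' := by
  refine ⟨fun i => ⟨fun ht => top_le_iff.1 (ht ▸ hle i), fun ht => ?_⟩,
    hd.subset fun i hi hdi => hi (le_antisymm (hle i) ?_)⟩
  · simpa [ht] using hle' i
  · simpa [hdi] using hle' i

noncomputable def supernatural {G : Type*} [AddGroup G] (A : AddSubgroup G) (i : ℕ) : ℕ∞ :=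
  ⨆ x : A, ((addOrderOf (x : G)).factorization (p i) : ℕ∞)

section Supernatural

variable {G H : Type*} [AddGroup G] [AddGroup H]

lemma le_supernatural {A : AddSubgroup G} {x : G} (hx : x ∈ A) (i : ℕ) :
    ((addOrderOf x).factorization (p i) : ℕ∞) ≤ supernatural A i :=
  le_iSup_of_le (⟨x, hx⟩ : A) le_rfl

lemma supernatural_le {A : AddSubgroup G} {i : ℕ} {a : ℕ∞}
    (h : ∀ x ∈ A, ((addOrderOf x).factorization (p i) : ℕ∞) ≤ a) : supernatural A i ≤ a :=
  iSup_le fun x => h x x.2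

lemma supernatural_congr {A : AddSubgroup G} {B : AddSubgroup H} (e : A ≃+ B) :
    supernatural A = supernatural B := by
  funext i
  refine e.toEquiv.iSup_congr fun x => ?_
  simp only [AddSubgroup.addOrderOf_coe, AddEquiv.toEquiv_eq_coe, EquivLike.coe_coe,
    AddEquiv.addOrderOf_eq]

lemma supernatural_mono {A B : AddSubgroup G} (h : A ≤ B) : supernatural A ≤ supernatural B :=
  fun i => supernatural_le fun _ hx => le_supernatural (h hx) i

end Supernatural

lemma supernatural_sup_zmultiples_le {G : Type*} [AddCommGroup G] (hG : IsAddTorsion G)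
    (C : AddSubgroup G) (b : G) (i : ℕ) :
    supernatural (C ⊔ AddSubgroup.zmultiples b) i ≤
      supernatural C i + (addOrderOf b).factorization (p i) := by
  refine supernatural_le fun x hx => ?_
  obtain ⟨c, hc, _, ⟨n, rfl⟩, rfl⟩ := AddSubgroup.mem_sup.1 hx
  set N := addOrderOf b
  have hNx : N • (c + n • b) = N • c := by
    rw [smul_add, smul_comm, addOrderOf_nsmul_eq_zero, smul_zero, add_zero]
  have hdvd := addOrderOf_dvd_addOrderOf_nsmul_mul (c + n • b) N
  rw [hNx] at hdvd
  have hfac := (Nat.factorization_le_iff_dvd (hG _).addOrderOf_pos.ne'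
    (Nat.mul_ne_zero (hG _).addOrderOf_pos.ne' (hG b).addOrderOf_pos.ne')).2 hdvd (p i)
  rw [Nat.factorization_mul (hG _).addOrderOf_pos.ne' (hG b).addOrderOf_pos.ne'] at hfac
  calc ((addOrderOf (c + n • b)).factorization (p i) : ℕ∞)
      ≤ (addOrderOf (N • c)).factorization (p i) + N.factorization (p i) := by
        exact_mod_cast hfac
    _ ≤ supernatural C i + N.factorization (p i) := by
        gcongr
        exact le_supernatural (AddSubgroup.nsmul_mem C hc N) i

lemma addOrderOf_coe_rat (q : ℚ) : addOrderOf (q : QZ) = q.den := by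
  simpa using AddCircle.addOrderOf_coe_rat (p := (1 : ℚ)) (q := q)

lemma isAddTorsion_QZ : IsAddTorsion QZ := by
  intro x
  obtain ⟨q, rfl⟩ := QuotientAddGroup.mk_surjective x
  exact addOrderOf_pos_iff.1 ((addOrderOf_coe_rat q).symm ▸ q.den_pos)

lemma cle_supernatural_of_largeEmb {A B : AddSubgroup QZ} (h : LargeEmb A B) :
    cle (supernatural A) (supernatural B) := by
  obtain ⟨C, -, ⟨e⟩, b, -, rfl⟩ := h
  rw [supernatural_congr e, AddSubgroup.closure_coe_union_singleton]
  have hle := supernatural_mono (le_sup_left : C ≤ C ⊔ AddSubgroup.zmultiples b)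
  have hfin : {i | (addOrderOf b).factorization (p i) ≠ 0}.Finite :=
    (addOrderOf b).factorization.hasFiniteSupport.preimage p_injective.injOn
  exact ⟨ceq_of_le_of_le_add _ hfin hle (supernatural_sup_zmultiples_le isAddTorsion_QZ C b),
    hle⟩

section Paths

variable {A B : AddSubgroup QZ} {n : ℕ}

lemma HasPath.ceq_supernatural (h : HasPath A B n) :
    ceq (supernatural A) (supernatural B) := by
  obtain ⟨C, ⟨e0⟩, ⟨en⟩, hstep⟩ := h
  have key : ∀ m ≤ n, ceq (supernatural (C 0)) (supernatural (C m)) := by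
    intro m hm
    induction m with
    | zero => exact ceq_refl _
    | succ m ih =>
      refine ceq_trans (ih (by omega)) ?_
      rcases hstep m (by omega) with h | h
      exacts [(cle_supernatural_of_largeEmb h).1, ceq_symm (cle_supernatural_of_largeEmb h).1]
  rw [← supernatural_congr e0, ← supernatural_congr en]
  exact key n le_rfl

lemma HasPath.supernatural_eq_of_zero (h : HasPath A B 0) :
    supernatural A = supernatural B := by
  obtain ⟨C, ⟨e0⟩, ⟨e1⟩, -⟩ := h
  rw [← supernatural_congr e0, supernatural_congr e1]

lemma HasPath.cle_or_cle_of_one (h : HasPath A B 1) :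
    cle (supernatural A) (supernatural B) ∨ cle (supernatural B) (supernatural A) := by
  obtain ⟨C, ⟨e0⟩, ⟨e1⟩, hstep⟩ := h
  rw [← supernatural_congr e0, ← supernatural_congr e1]
  exact (hstep 0 one_pos).imp cle_supernatural_of_largeEmb cle_supernatural_of_largeEmb

lemma hasPath_zero (A : AddSubgroup QZ) : HasPath A A 0 :=
  ⟨fun _ => A, ⟨AddEquiv.refl _⟩, ⟨AddEquiv.refl _⟩, fun _ h => absurd h (Nat.not_lt_zero _)⟩

lemma LargeEmb.hasPath_one (h : LargeEmb A B) : HasPath A B 1 := by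
  refine ⟨fun t => if t = 0 then A else B, ⟨AddEquiv.refl _⟩, ⟨AddEquiv.refl _⟩, ?_⟩
  intro i hi
  obtain rfl : i = 0 := Nat.lt_one_iff.1 hi
  exact Or.inl h

lemma hasPath_two {M : AddSubgroup QZ} (hA : LargeEmb A M) (hB : LargeEmb B M) :
    HasPath A B 2 := by
  refine ⟨fun t => if t = 0 then A else if t = 1 then M else B,
    ⟨AddEquiv.refl _⟩, ⟨AddEquiv.refl _⟩, ?_⟩
  intro i hi
  interval_cases i
  exacts [Or.inl hA, Or.inr hB]

lemma dis_eq_of_hasPath (h : HasPath A B n) (hmin : ∀ m < n, ¬ HasPath A B m) :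
    dis A B = n := by
  refine le_antisymm (sInf_le ⟨n, rfl, h⟩) (le_sInf ?_)
  rintro _ ⟨m, rfl, hm⟩
  by_contra hlt
  exact hmin m (by exact_mod_cast not_le.1 hlt) hm

lemma dis_eq_top (h : ∀ n, ¬ HasPath A B n) : dis A B = ⊤ :=
  sInf_eq_top.2 fun _ ⟨n, _, hn⟩ => absurd hn (h n)

end Paths

lemma addOrderOf_unitFrac (i j : ℕ) :
    addOrderOf (((1 : ℚ) / (p i : ℚ) ^ j : ℚ) : QZ) = p i ^ j := by
  rw [addOrderOf_coe_rat, one_div, ← Nat.cast_pow,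
    Rat.inv_natCast_den_of_pos (pow_pos (p_prime i).pos j)]

lemma factorization_p_pow (i i' j : ℕ) :
    (p i ^ j).factorization (p i') = if i = i' then j else 0 := by
  rw [(p_prime i).factorization_pow, Finsupp.single_apply]
  exact if_congr p_injective.eq_iff rfl rfl

lemma unitFrac_mem_gen {k : ℕ → ℕ∞} {i j : ℕ} (hj : (j : ℕ∞) ≤ k i) :
    (((1 : ℚ) / (p i : ℚ) ^ j : ℚ) : QZ) ∈ gen k :=
  AddSubgroup.subset_closure ⟨i, j, hj, rfl⟩

lemma gen_mono {k k' : ℕ → ℕ∞} (h : k ≤ k') : gen k ≤ gen k' :=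
  (AddSubgroup.closure_le _).2 fun _ ⟨i, _, hj, hx⟩ => hx ▸ unitFrac_mem_gen (hj.trans (h i))

lemma factorization_addOrderOf_le_of_mem_gen {k : ℕ → ℕ∞} {x : QZ} (hx : x ∈ gen k) (i : ℕ) :
    ((addOrderOf x).factorization (p i) : ℕ∞) ≤ k i := by
  induction hx using AddSubgroup.closure_induction generalizing i with
  | mem _ hx =>
    obtain ⟨i', j, hj, rfl⟩ := hx
    rw [addOrderOf_unitFrac, factorization_p_pow]
    split_ifs with h
    · exact h ▸ hj
    · simp
  | zero => simp
  | add x y _ _ hx hy =>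
    have hdvd := (AddCommute.all x y).addOrderOf_add_dvd_lcm
    have hx0 := (isAddTorsion_QZ x).addOrderOf_pos.ne'
    have hy0 := (isAddTorsion_QZ y).addOrderOf_pos.ne'
    have hfac := (Nat.factorization_le_iff_dvd (isAddTorsion_QZ _).addOrderOf_pos.ne'
      (Nat.lcm_ne_zero hx0 hy0)).2 hdvd (p i)
    rw [Nat.factorization_lcm hx0 hy0, Finsupp.sup_apply] at hfac
    calc ((addOrderOf (x + y)).factorization (p i) : ℕ∞)
        ≤ ((addOrderOf x).factorization (p i) ⊔ (addOrderOf y).factorization (p i) : ℕ) := by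
          exact_mod_cast hfac
      _ ≤ k i := by exact_mod_cast sup_le (hx i) (hy i)
  | neg x _ hx => simpa using hx i

lemma supernatural_gen (k : ℕ → ℕ∞) : supernatural (gen k) = k := by
  funext i
  refine le_antisymm (supernatural_le fun x hx => factorization_addOrderOf_le_of_mem_gen hx i)
    (ENat.forall_natCast_le_iff_le.1 fun j hj => ?_)
  have := le_supernatural (unitFrac_mem_gen hj) i
  rwa [addOrderOf_unitFrac, factorization_p_pow, if_pos rfl] at this

lemma unitFrac_mem_zmultiples {i j e : ℕ} (hj : j ≤ e) :
    (((1 : ℚ) / (p i : ℚ) ^ j : ℚ) : QZ) ∈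
      AddSubgroup.zmultiples (((1 : ℚ) / (p i : ℚ) ^ e : ℚ) : QZ) := by
  obtain ⟨d, rfl⟩ := Nat.exists_eq_add_of_le hj
  have hp : (p i : ℚ) ≠ 0 := Nat.cast_ne_zero.2 (p_prime i).ne_zero
  have hmul : (p i ^ d : ℕ) • (((1 : ℚ) / (p i : ℚ) ^ (j + d) : ℚ) : QZ) =
      (((1 : ℚ) / (p i : ℚ) ^ j : ℚ) : QZ) := by
    rw [← QuotientAddGroup.mk_nsmul, nsmul_eq_mul]
    congr 1
    rw [Nat.cast_pow, pow_add]
    field_simp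
  exact hmul ▸ AddSubgroup.nsmul_mem _ (AddSubgroup.mem_zmultiples _) _

lemma largeEmb_gen_of_cle {k k' : ℕ → ℕ∞} (h : cle k k') : LargeEmb (gen k) (gen k') := by
  obtain ⟨⟨htop, hfin⟩, hle⟩ := h
  set F := hfin.toFinset
  set y : ℕ → QZ := fun i => (((1 : ℚ) / (p i : ℚ) ^ (k' i).toNat : ℚ) : QZ)
  have hk'F : ∀ i ∈ F, ((k' i).toNat : ℕ∞) = k' i := fun i hi => ENat.natCast_toNat fun hi' =>
    (Set.Finite.mem_toFinset hfin).1 hi (((htop i).2 hi').trans hi'.symm)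
  have hyb : ∀ i ∈ F, y i ∈ AddSubgroup.zmultiples (∑ i ∈ F, y i) :=
    fun i => mem_zmultiples_sum_of_pairwise_coprime F y fun i _ i' _ hii' => by
      simpa only [y, addOrderOf_unitFrac] using coprime_p_pow hii' _ _
  have hb : ∑ i ∈ F, y i ∈ gen k' :=
    AddSubgroup.sum_mem _ fun i _ => unitFrac_mem_gen (ENat.natCast_toNat_le_self _)
  refine ⟨gen k, gen_mono hle, ⟨AddEquiv.refl _⟩, ∑ i ∈ F, y i, hb, ?_⟩
  rw [AddSubgroup.closure_coe_union_singleton]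
  refine le_antisymm (sup_le (gen_mono hle) (AddSubgroup.zmultiples_le_of_mem hb))
    ((AddSubgroup.closure_le _).2 ?_)
  rintro _ ⟨i, j, hj, rfl⟩
  by_cases hi : i ∈ F
  · refine AddSubgroup.mem_sup_right (AddSubgroup.zmultiples_le_of_mem (hyb i hi)
      (unitFrac_mem_zmultiples ?_))
    exact_mod_cast hj.trans_eq (hk'F i hi).symm
  · have hkk' : k i = k' i := by simpa [F] using hi
    exact AddSubgroup.mem_sup_left (unitFrac_mem_gen (hkk' ▸ hj))

end QZNetwork

open QZNetwork in
/-- for choice sequences `k̄, k̄′`: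
(1) if `k̄ = k̄′` then `dis ⟨k̄⟩ ⟨k̄′⟩ = 0`;
(2) if `k̄ ⪯ k̄′` and `k̄ ≠ k̄′` then `dis ⟨k̄⟩ ⟨k̄′⟩ = 1`;
(3) if `k̄ ≡ k̄′`, `k̄ ⋠ k̄′` and `k̄′ ⋠ k̄` then `dis ⟨k̄⟩ ⟨k̄′⟩ = 2`;
(4) if `k̄ ≢ k̄′` then `dis ⟨k̄⟩ ⟨k̄′⟩ = ∞`. -/
theorem dis_subgroups_of_QZ (k k' : ℕ → ℕ∞) :
    (k = k' → dis (gen k) (gen k') = 0) ∧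
    (cle k k' → k ≠ k' → dis (gen k) (gen k') = 1) ∧
    (ceq k k' → ¬ cle k k' → ¬ cle k' k → dis (gen k) (gen k') = 2) ∧
    (¬ ceq k k' → dis (gen k) (gen k') = ⊤) := by
  have eq_of_path_zero (h : HasPath (gen k) (gen k') 0) : k = k' := by
    simpa only [supernatural_gen] using h.supernatural_eq_of_zero
  refine ⟨?_, fun hle hne => ?_, fun hceq hnle hnle' => ?_, fun hnceq => ?_⟩
  · rintro rfl
    exact dis_eq_of_hasPath (hasPath_zero _) fun m hm => absurd hm (Nat.not_lt_zero m)
  · refine dis_eq_of_hasPath (largeEmb_gen_of_cle hle).hasPath_one fun m hm h => hne ?_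
    obtain rfl := Nat.lt_one_iff.1 hm
    exact eq_of_path_zero h
  · refine dis_eq_of_hasPath (hasPath_two (largeEmb_gen_of_cle (cle_sup_left hceq))
      (largeEmb_gen_of_cle (cle_sup_right hceq))) fun m hm h => ?_
    interval_cases m
    · exact hnle (eq_of_path_zero h ▸ cle_refl k)
    · have hcle := h.cle_or_cle_of_one
      rw [supernatural_gen, supernatural_gen] at hcle
      exact hcle.elim hnle hnle'
  · exact dis_eq_top fun n h => hnceq (by simpa only [supernatural_gen] using h.ceq_supernatural)
end

section
/- Let A = (A,f) and B = (B,g) be connected monounary algebras whose cores are both isomorphic to C_n for some positive n ∈ ℕ, and let ⟨T^A_i : i < n⟩ and ⟨T^B_i : i < n⟩ be tree-algebra decompositions of A and B, indexed compatibly along the cycle (that is, the roots r^A_0,…,r^A_{n−1} and r^B_0,…,r^B_{n−1} satisfy f(r^A_i) = r^A_{(i+1) mod n} and g(r^B_i) = r^B_{(i+1) mod n}). Then dis(A,B) = min over k < n of Σ_{i<n} dis(T^A_i, T^B_{(i+k) mod n}), computed in ℕ ∪ {∞}. -/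
/-- A monounary algebra: a type equipped with one unary operation. -/
structure MonoUnary : Type 1 where
  carrier : Type
  op : carrier → carrier

namespace MonoUnary

/-- The subalgebra of `A` generated by `X`: the closure of `X` under the operation. -/
def closure (A : MonoUnary) (X : Set A.carrier) : Set A.carrier :=
  {y | ∃ x ∈ X, ∃ n : ℕ, A.op^[n] x = y}

/-- Isomorphism of monounary algebras. -/
def Iso (A B : MonoUnary) : Prop :=
  ∃ e : A.carrier ≃ B.carrier, ∀ x, e (A.op x) = B.op (e x)

/-- The monounary algebra induced on a subset closed under the operation. -/
def restrict (B : MonoUnary) (S : Set B.carrier) (hS : ∀ x ∈ S, B.op x ∈ S) : MonoUnary where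
  carrier := ↥S
  op := fun x => ⟨B.op x.1, hS x.1 x.2⟩

/-- `A` is largely embeddable into `B`: `B` has a large subalgebra isomorphic to `A`,
i.e. a (nonempty, closed) subset `S` such that together with one extra element `b`
it generates the whole of `B`. -/
def LargeEmb (A B : MonoUnary) : Prop :=
  ∃ (S : Set B.carrier) (hS : ∀ x ∈ S, B.op x ∈ S), S.Nonempty ∧
    Iso A (B.restrict S hS) ∧ ∃ b : B.carrier, B.closure (S ∪ {b}) = Set.univ

/-- One step in the network of large embeddings (symmetric closure of `⋖`). -/
def Step (A B : MonoUnary) : Prop := LargeEmb A B ∨ LargeEmb B A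

/-- There is a path of length `n` between `A` and `B` in the network. -/
def HasPath (A B : MonoUnary) (n : ℕ) : Prop :=
  ∃ C : ℕ → MonoUnary, Iso (C 0) A ∧ Iso (C n) B ∧ ∀ i < n, Step (C i) (C (i + 1))

/-- The generator distance between monounary algebras, in `ℕ ∪ {∞}`. -/
noncomputable def dis (A B : MonoUnary) : ℕ∞ :=
  sInf {q : ℕ∞ | ∃ n : ℕ, q = (n : ℕ∞) ∧ HasPath A B n}

/-- The minimum number of generators of `A`, `∞` if `A` is not finitely generated. -/
noncomputable def MGen (A : MonoUnary) : ℕ∞ :=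
  sInf {q : ℕ∞ | ∃ X : Finset A.carrier, q = (X.card : ℕ∞) ∧ A.closure ↑X = Set.univ}

/-- A monounary algebra is connected iff any two elements have trajectories that meet. -/
def Connected (A : MonoUnary) : Prop :=
  ∀ a b : A.carrier, ∃ k m : ℕ, A.op^[k] a = A.op^[m] b

end MonoUnary

namespace MonoUnary

/-- `A` has core `C_n`: `n` is the least positive natural number such that
`f^[n] a = a` for some `a`. -/
def HasCoreC (A : MonoUnary) (n : ℕ) : Prop :=
  0 < n ∧ (∃ a, A.op^[n] a = a) ∧ ∀ m : ℕ, 0 < m → (∃ a, A.op^[m] a = a) → n ≤ m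

/-- Given the cycle `r : Fin n → A.carrier` of a connected monounary algebra with core
`C_n`, `treeSet A r i` is the set of elements whose trajectory first meets the cycle at
`r i`. -/
def treeSet (A : MonoUnary) {n : ℕ} (r : Fin n → A.carrier) (i : Fin n) : Set A.carrier :=
  {x | ∃ k : ℕ, A.op^[k] x = r i ∧ ∀ j < k, A.op^[j] x ∉ Set.range r}

/-- The `i`-th member of the tree-algebra decomposition: the algebra on `treeSet A r i`
whose operation fixes `r i` and agrees with `A.op` elsewhere. -/
noncomputable def treeComp (A : MonoUnary) {n : ℕ} (r : Fin n → A.carrier) (i : Fin n) : MonoUnary where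
  carrier := ↥(treeSet A r i)
  op := fun x =>
    letI : DecidableEq A.carrier := Classical.decEq _
    if hx : (x : A.carrier) = r i then x
    else
      ⟨A.op x.1, by
        obtain ⟨k, hk, hlt⟩ := x.2
        cases k with
        | zero => simp only [Function.iterate_zero_apply] at hk; exact absurd hk hx
        | succ k' =>
          refine ⟨k', ?_, ?_⟩
          · rw [← Function.iterate_succ_apply]; exact hk
          · intro j hj
            rw [← Function.iterate_succ_apply]
            exact hlt (j + 1) (Nat.succ_lt_succ hj)⟩

end MonoUnary

/-!
Gluing inverts the tree decomposition: a connected algebra is recovered by hanging its tree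
algebras off the points of an `n`-cycle, and gluing turns a large embedding of one tree into a
large embedding of the glued algebras. Changing one tree at a time therefore gives
`dis A B ≤ ∑ i, dis (T^A_i) (T^B_(i+k))` for every rotation `k`.

Conversely, a large embedding between connected algebras with core `C_n` maps the cycle onto the
cycle up to a rotation and changes only the tree of the new generator, by one step; with the
triangle inequality this bounds the right-hand side by the length of any path through such
algebras. An arbitrary path between two of them can be replaced by one of the same length
through connected algebras with core `C_n` (for trees: through tree algebras, as gluing needs).
To see this, follow the component containing the cycle of the first algebra: every cycle
component that appears or is swallowed on the way is `ρ`-shaped, and any two `ρ`-shaped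
algebras with the same cycle are one step apart.
-/

namespace Function

variable {α : Type*} {f : α → α} {w : α} {ℓ : ℕ}

def IsPreperiod (f : α → α) (w : α) (ℓ : ℕ) : Prop :=
  f^[ℓ] w ∈ periodicPts f ∧ ∀ j < ℓ, f^[j] w ∉ periodicPts f

lemma exists_isPreperiod (h : ∃ k, f^[k] w ∈ periodicPts f) : ∃ ℓ, IsPreperiod f w ℓ := by
  classical
  exact ⟨Nat.find h, Nat.find_spec h, fun _ hj => Nat.find_min h hj⟩

lemma IsPreperiod.iterate (h : IsPreperiod f w ℓ) {d : ℕ} (hd : d ≤ ℓ) :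
    IsPreperiod f (f^[d] w) (ℓ - d) := by
  refine ⟨by rw [← iterate_add_apply, Nat.sub_add_cancel hd]; exact h.1, fun j hj => ?_⟩
  rw [← iterate_add_apply]
  exact h.2 _ (by omega)

lemma IsPreperiod.iterate_eq_iterate_iff (h : IsPreperiod f w ℓ) {i j : ℕ} :
    f^[i] w = f^[j] w ↔
      i = j ∨ ℓ ≤ i ∧ ℓ ≤ j ∧ i ≡ j [MOD minimalPeriod f (f^[ℓ] w)] := by
  set p := minimalPeriod f (f^[ℓ] w)
  have hp : 0 < p := minimalPeriod_pos_of_mem_periodicPts h.1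
  have hcycle : ∀ a b, f^[a] (f^[ℓ] w) = f^[b] (f^[ℓ] w) ↔ a ≡ b [MOD p] := fun a b => by
    rw [← iterate_mod_minimalPeriod_eq (n := a), ← iterate_mod_minimalPeriod_eq (n := b),
      iterate_eq_iterate_iff_of_lt_minimalPeriod (Nat.mod_lt _ hp) (Nat.mod_lt _ hp)]
    rfl
  have hshift : ∀ {i}, ℓ ≤ i → f^[i] w = f^[i - ℓ] (f^[ℓ] w) := fun hi => by
    rw [← iterate_add_apply, Nat.sub_add_cancel hi]
  have hmod : ∀ {i j}, ℓ ≤ i → ℓ ≤ j → (f^[i] w = f^[j] w ↔ i ≡ j [MOD p]) := by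
    intro i j hi hj
    rw [hshift hi, hshift hj, hcycle]
    constructor
    · intro h'
      simpa [Nat.sub_add_cancel hi, Nat.sub_add_cancel hj] using h'.add_right ℓ
    · intro h'
      exact Nat.ModEq.add_right_cancel' ℓ (by rwa [Nat.sub_add_cancel hi, Nat.sub_add_cancel hj])
  have htail : ∀ {i j}, i < j → f^[i] w = f^[j] w → ℓ ≤ i := by
    intro i j hij heq
    by_contra! hlt
    refine h.2 i hlt (mk_mem_periodicPts (Nat.sub_pos_of_lt hij) ?_)
    rw [IsPeriodicPt, IsFixedPt, ← iterate_add_apply, Nat.sub_add_cancel hij.le, heq]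
  constructor
  · intro heq
    rcases lt_trichotomy i j with hij | rfl | hij
    · have hi := htail hij heq
      exact Or.inr ⟨hi, hi.trans hij.le, (hmod hi (hi.trans hij.le)).1 heq⟩
    · exact Or.inl rfl
    · have hj := htail hij heq.symm
      exact Or.inr ⟨hj.trans hij.le, hj, (hmod (hj.trans hij.le) hj).1 heq⟩
  · rintro (rfl | ⟨hi, hj, hij⟩)
    · rfl
    · exact (hmod hi hj).2 hij

end Function

namespace MonoUnary

open Function Fin.NatCast

section Embeddings

variable {X X' Y Y' Z : MonoUnary}

def IsEmb (v : X.carrier → Y.carrier) : Prop :=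
  Injective v ∧ Semiconj v X.op Y.op

/-- `LargeEmb` in terms of maps: `range v` together with `b` generates `Y`. -/
structure IsLargeEmb (v : X.carrier → Y.carrier) (b : Y.carrier) : Prop where
  isEmb : IsEmb v
  cover : ∀ y, y ∈ Set.range v ∨ ∃ k, Y.op^[k] b = y

lemma IsEmb.iterate {v : X.carrier → Y.carrier} (hv : IsEmb v) (k : ℕ) (x : X.carrier) :
    v (X.op^[k] x) = Y.op^[k] (v x) :=
  hv.2.iterate_right k x

lemma IsEmb.comp {v : X.carrier → Y.carrier} {w : Y.carrier → Z.carrier} (hw : IsEmb w)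
    (hv : IsEmb v) : IsEmb (w ∘ v) :=
  ⟨hw.1.comp hv.1, hw.2.comp_left hv.2⟩

lemma IsEmb.mapsTo_range {v : X.carrier → Y.carrier} (hv : IsEmb v) :
    Set.MapsTo Y.op (Set.range v) (Set.range v) := by
  rintro _ ⟨x, rfl⟩
  exact ⟨X.op x, hv.2 x⟩

lemma isEmb_val (S : Set X.carrier) (hS : Set.MapsTo X.op S S) :
    IsEmb (X := X.restrict S hS) (Y := X) Subtype.val :=
  ⟨Subtype.val_injective, fun _ => rfl⟩

lemma iso_iff : Iso X Y ↔ ∃ v : X.carrier → Y.carrier, IsEmb v ∧ Surjective v :=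
  ⟨fun ⟨e, he⟩ => ⟨e, ⟨e.injective, he⟩, e.surjective⟩,
    fun ⟨v, hv, hs⟩ => ⟨Equiv.ofBijective v ⟨hv.1, hs⟩, hv.2⟩⟩

lemma iso_of_isEmb {v : X.carrier → Y.carrier} (hv : IsEmb v) (hs : Surjective v) : Iso X Y :=
  iso_iff.2 ⟨v, hv, hs⟩

lemma Iso.refl (X : MonoUnary) : Iso X X := ⟨Equiv.refl _, fun _ => rfl⟩

lemma Iso.symm (h : Iso X Y) : Iso Y X := by
  obtain ⟨e, he⟩ := h
  exact ⟨e.symm, fun y => e.injective (by simp [he])⟩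

lemma Iso.trans (h₁ : Iso X Y) (h₂ : Iso Y Z) : Iso X Z := by
  obtain ⟨e, he⟩ := h₁
  obtain ⟨f, hf⟩ := h₂
  exact ⟨e.trans f, fun x => by simp [he, hf]⟩

lemma largeEmb_iff :
    LargeEmb X Y ↔ Nonempty X.carrier ∧ ∃ (v : X.carrier → Y.carrier) (b : Y.carrier),
      IsLargeEmb v b := by
  constructor
  · rintro ⟨S, hS, ⟨s, hs⟩, ⟨e, he⟩, b, hb⟩
    have hv : IsEmb (Subtype.val ∘ e) := (isEmb_val S hS).comp ⟨e.injective, he⟩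
    have hrange : Set.range (Subtype.val ∘ e) = S := by
      ext y
      refine ⟨fun ⟨x, hx⟩ => hx ▸ (e x).2, fun hy => ⟨e.symm ⟨y, hy⟩, ?_⟩⟩
      exact congrArg Subtype.val (e.apply_symm_apply ⟨y, hy⟩)
    refine ⟨⟨e.symm ⟨s, hs⟩⟩, _, b, hv, fun y => ?_⟩
    obtain ⟨x, hx | rfl, k, rfl⟩ : y ∈ Y.closure (S ∪ {b}) := hb ▸ Set.mem_univ y
    · rw [hrange]
      exact Or.inl (Set.MapsTo.iterate hS k hx)
    · exact Or.inr ⟨k, rfl⟩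
  · rintro ⟨⟨x₀⟩, v, b, hv, hcover⟩
    refine ⟨Set.range v, hv.mapsTo_range, ⟨v x₀, x₀, rfl⟩,
      iso_of_isEmb (v := Set.rangeFactorization v)
        ⟨fun x y h => hv.1 (congrArg Subtype.val h), fun x => Subtype.ext (hv.2 x)⟩
        Set.rangeFactorization_surjective, b, Set.eq_univ_of_forall fun y => ?_⟩
    rcases hcover y with hy | ⟨k, rfl⟩
    · exact ⟨y, Or.inl hy, 0, rfl⟩
    · exact ⟨b, Or.inr rfl, k, rfl⟩

lemma LargeEmb.congr_left (h : Iso X' X) (hXY : LargeEmb X Y) : LargeEmb X' Y := by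
  obtain ⟨⟨x⟩, v, b, hv⟩ := largeEmb_iff.1 hXY
  obtain ⟨e, he⟩ := h
  refine largeEmb_iff.2 ⟨⟨e.symm x⟩, v ∘ e, b, hv.isEmb.comp ⟨e.injective, he⟩, fun y => ?_⟩
  rw [Set.range_comp, e.range_eq_univ, Set.image_univ]
  exact hv.cover y

lemma LargeEmb.congr_right (hXY : LargeEmb X Y) (h : Iso Y Y') : LargeEmb X Y' := by
  obtain ⟨hX, v, b, hv⟩ := largeEmb_iff.1 hXY
  obtain ⟨e, he⟩ := h
  refine largeEmb_iff.2 ⟨hX, e ∘ v, e b, (IsEmb.comp ⟨e.injective, he⟩ hv.isEmb), fun y => ?_⟩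
  rcases hv.cover (e.symm y) with ⟨x, hx⟩ | ⟨k, hk⟩
  · exact Or.inl ⟨x, by simp [hx]⟩
  · exact Or.inr ⟨k, by rw [← (show IsEmb e from ⟨e.injective, he⟩).iterate, hk,
      Equiv.apply_symm_apply]⟩

lemma Step.symm (h : Step X Y) : Step Y X := Or.symm h

lemma Step.congr_left (h : Iso X' X) (hXY : Step X Y) : Step X' Y :=
  hXY.imp (·.congr_left h) (·.congr_right h.symm)

lemma Step.congr_right (hXY : Step X Y) (h : Iso Y Y') : Step X Y' :=
  (hXY.symm.congr_left h.symm).symm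

lemma step_self (h : Nonempty X.carrier) : Step X X :=
  Or.inl <| largeEmb_iff.2 ⟨h, id, h.some, ⟨injective_id, fun _ => rfl⟩,
    fun y => Or.inl ⟨y, rfl⟩⟩

end Embeddings

section Paths

variable {X X' Y Y' Z : MonoUnary}

/-- `HasPath` through vertices satisfying `P`, in inductive form. -/
inductive PathIn (P : MonoUnary → Prop) : MonoUnary → MonoUnary → ℕ → Prop
  | nil {X Y : MonoUnary} : P X → P Y → Iso X Y → PathIn P X Y 0
  | cons {X Y Z : MonoUnary} {m : ℕ} : P X → Step X Y → PathIn P Y Z m → PathIn P X Z (m + 1)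

variable {P Q : MonoUnary → Prop} {m k : ℕ}

lemma PathIn.source (h : PathIn P X Y m) : P X := by
  cases h <;> assumption

lemma PathIn.target (h : PathIn P X Y m) : P Y := by
  induction h with
  | nil _ hY _ => exact hY
  | cons _ _ _ ih => exact ih

lemma PathIn.mono (hPQ : ∀ X, P X → Q X) (h : PathIn P X Y m) : PathIn Q X Y m := by
  induction h with
  | nil hX hY e => exact .nil (hPQ _ hX) (hPQ _ hY) e
  | cons hX hs _ ih => exact .cons (hPQ _ hX) hs ih

lemma PathIn.congr_left (e : Iso X' X) (hX' : P X') (h : PathIn P X Y m) : PathIn P X' Y m := by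
  cases h with
  | nil _ hY e' => exact .nil hX' hY (e.trans e')
  | cons _ hs hp => exact .cons hX' (hs.congr_left e) hp

lemma PathIn.congr_right (h : PathIn P X Y m) (e : Iso Y Y') (hY' : P Y') : PathIn P X Y' m := by
  induction h with
  | nil hX _ e' => exact .nil hX hY' (e'.trans e)
  | cons hX hs _ ih => exact .cons hX hs (ih e)

lemma PathIn.trans (h₁ : PathIn P X Y m) (h₂ : PathIn P Y Z k) : PathIn P X Z (m + k) := by
  induction h₁ with
  | nil hX _ e => simpa using h₂.congr_left e hX
  | cons hX hs _ ih => rw [Nat.add_right_comm]; exact .cons hX hs (ih h₂)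

lemma PathIn.single (hX : P X) (hY : P Y) (hs : Step X Y) : PathIn P X Y 1 :=
  .cons hX hs (.nil hY hY (Iso.refl Y))

lemma PathIn.symm (h : PathIn P X Y m) : PathIn P Y X m := by
  induction h with
  | nil hX hY e => exact .nil hY hX e.symm
  | cons hX hs hp ih => exact ih.trans (.single hp.source hX hs.symm)

lemma hasPath_iff_pathIn : HasPath X Y m ↔ PathIn (fun _ => True) X Y m := by
  constructor
  · rintro ⟨C, h₀, hm, hs⟩
    induction m generalizing X C with
    | zero => exact .nil trivial trivial (h₀.symm.trans hm)
    | succ m ih =>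
      exact .cons trivial ((hs 0 m.succ_pos).congr_left h₀.symm)
        (ih (fun i => C (i + 1)) (Iso.refl _) hm fun i hi => hs (i + 1) (by omega))
  · intro h
    induction h with
    | @nil X Y _ _ e => exact ⟨fun _ => X, Iso.refl X, e, fun i hi => absurd hi i.not_lt_zero⟩
    | @cons X Y _ m _ hs _ ih =>
      obtain ⟨C, h₀, hm, hsteps⟩ := ih
      refine ⟨fun i => match i with | 0 => X | j + 1 => C j, Iso.refl X, hm, fun i hi => ?_⟩
      cases i with
      | zero => exact hs.congr_right h₀.symm
      | succ j => exact hsteps j (by omega)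

lemma dis_le_of_pathIn (h : PathIn P X Y m) : dis X Y ≤ m :=
  sInf_le ⟨m, rfl, hasPath_iff_pathIn.2 (h.mono fun _ _ => trivial)⟩

lemma le_dis {c : ℕ∞} (h : ∀ m, HasPath X Y m → c ≤ m) : c ≤ dis X Y :=
  le_sInf <| by rintro _ ⟨m, rfl, hm⟩; exact h m hm

lemma exists_hasPath_of_dis_ne_top (h : dis X Y ≠ ⊤) :
    ∃ m : ℕ, dis X Y = m ∧ HasPath X Y m := by
  have hne : {q : ℕ∞ | ∃ m : ℕ, q = m ∧ HasPath X Y m}.Nonempty := by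
    by_contra hempty
    exact h (by rw [dis, Set.not_nonempty_iff_eq_empty.1 hempty, sInf_empty])
  exact csInf_mem hne

lemma dis_comm_le : dis X Y ≤ dis Y X :=
  le_dis fun _ h => dis_le_of_pathIn (hasPath_iff_pathIn.1 h).symm

lemma dis_comm : dis X Y = dis Y X :=
  le_antisymm dis_comm_le dis_comm_le

lemma dis_triangle : dis X Z ≤ dis X Y + dis Y Z := by
  by_cases h₁ : dis X Y = ⊤
  · simp [h₁]
  by_cases h₂ : dis Y Z = ⊤
  · simp [h₂]
  obtain ⟨m, hm, p⟩ := exists_hasPath_of_dis_ne_top h₁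
  obtain ⟨k, hk, q⟩ := exists_hasPath_of_dis_ne_top h₂
  rw [hm, hk, ← Nat.cast_add]
  exact dis_le_of_pathIn ((hasPath_iff_pathIn.1 p).trans (hasPath_iff_pathIn.1 q))

end Paths

section Components

variable {X Y : MonoUnary}

def Joined (X : MonoUnary) (x y : X.carrier) : Prop :=
  ∃ k m : ℕ, X.op^[k] x = X.op^[m] y

lemma Joined.refl (x : X.carrier) : X.Joined x x := ⟨0, 0, rfl⟩

lemma Joined.symm {x y : X.carrier} (h : X.Joined x y) : X.Joined y x := by
  obtain ⟨k, m, h⟩ := h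
  exact ⟨m, k, h.symm⟩

lemma Joined.trans {x y z : X.carrier} (h₁ : X.Joined x y) (h₂ : X.Joined y z) :
    X.Joined x z := by
  obtain ⟨k, m, h₁⟩ := h₁
  obtain ⟨k', m', h₂⟩ := h₂
  refine ⟨k' + k, m + m', ?_⟩
  rw [iterate_add_apply, h₁, ← iterate_add_apply, add_comm k' m, iterate_add_apply, h₂,
    ← iterate_add_apply]

lemma Joined.op_left {x y : X.carrier} (h : X.Joined x y) : X.Joined (X.op x) y := by
  obtain ⟨k, m, h⟩ := h
  exact ⟨k, m + 1, by rw [← iterate_succ_apply, iterate_succ_apply', h, iterate_succ_apply']⟩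

lemma joined_iterate_left (x : X.carrier) (k : ℕ) : X.Joined (X.op^[k] x) x :=
  ⟨0, k, rfl⟩

lemma Joined.exists_iterate_eq {x y : X.carrier} (h : X.Joined x y)
    (hy : y ∈ periodicPts X.op) : ∃ k, X.op^[k] x = y := by
  obtain ⟨k, m, h⟩ := h
  have hp := minimalPeriod_pos_of_mem_periodicPts hy
  refine ⟨minimalPeriod X.op y * m - m + k, ?_⟩
  rw [iterate_add_apply, h, ← iterate_add_apply,
    Nat.sub_add_cancel (Nat.le_mul_of_pos_left m hp)]
  exact ((isPeriodicPt_minimalPeriod X.op y).mul_const m).eq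

lemma Joined.minimalPeriod_eq {x y : X.carrier} (h : X.Joined x y)
    (hx : x ∈ periodicPts X.op) (hy : y ∈ periodicPts X.op) :
    minimalPeriod X.op x = minimalPeriod X.op y := by
  obtain ⟨k, rfl⟩ := h.exists_iterate_eq hy
  obtain ⟨k', hk'⟩ := h.symm.exists_iterate_eq hx
  refine minimalPeriod_eq_minimalPeriod_iff.2 fun p => ⟨fun hp => hp.apply_iterate k, fun hp => ?_⟩
  rw [← hk']
  exact hp.apply_iterate k'

lemma IsEmb.joined_iff {v : X.carrier → Y.carrier} (hv : IsEmb v) {x y : X.carrier} :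
    Y.Joined (v x) (v y) ↔ X.Joined x y := by
  simp only [Joined, ← hv.iterate, hv.1.eq_iff]

lemma IsEmb.minimalPeriod_eq {v : X.carrier → Y.carrier} (hv : IsEmb v) (x : X.carrier) :
    minimalPeriod Y.op (v x) = minimalPeriod X.op x :=
  minimalPeriod_eq_minimalPeriod_iff.2 fun p => by
    simp only [IsPeriodicPt, IsFixedPt, ← hv.iterate, hv.1.eq_iff]

lemma IsEmb.mem_range_of_joined {v : X.carrier → Y.carrier} (hv : IsEmb v) {x : X.carrier}
    {a : Y.carrier} (ha : a ∈ periodicPts Y.op) (h : Y.Joined (v x) a) : a ∈ Set.range v := by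
  obtain ⟨k, rfl⟩ := h.exists_iterate_eq ha
  exact ⟨X.op^[k] x, hv.iterate k x⟩

def component (X : MonoUnary) (a : X.carrier) : Set X.carrier :=
  {z | X.Joined z a}

lemma mapsTo_component (X : MonoUnary) (a : X.carrier) :
    Set.MapsTo X.op (X.component a) (X.component a) :=
  fun _ hz => Joined.op_left hz

def compAlg (X : MonoUnary) (a : X.carrier) : MonoUnary :=
  X.restrict (X.component a) (X.mapsTo_component a)

lemma isEmb_compAlg_val (X : MonoUnary) (a : X.carrier) :
    IsEmb (X := X.compAlg a) (Y := X) Subtype.val :=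
  isEmb_val _ _

lemma compAlg_connected (X : MonoUnary) (a : X.carrier) : Connected (X.compAlg a) := by
  intro z w
  exact (X.isEmb_compAlg_val a).joined_iff.1 (z.2.trans w.2.symm)

lemma iso_compAlg (hX : Connected X) (a : X.carrier) : Iso (X.compAlg a) X :=
  iso_of_isEmb (X.isEmb_compAlg_val a) fun z => ⟨⟨z, hX z a⟩, rfl⟩

end Components

section Unicyclic

variable {X Y : MonoUnary} {n : ℕ}

def Unicyclic (n : ℕ) (X : MonoUnary) : Prop :=
  Connected X ∧ HasCoreC X n

lemma hasCoreC_iff (hX : Connected X) :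
    HasCoreC X n ↔ 0 < n ∧ ∃ a, minimalPeriod X.op a = n := by
  constructor
  · rintro ⟨hn, ⟨a, ha⟩, hmin⟩
    have hper : IsPeriodicPt X.op n a := ha
    refine ⟨hn, a, le_antisymm (hper.minimalPeriod_le hn) ?_⟩
    exact hmin _ (hper.minimalPeriod_pos hn) ⟨a, isPeriodicPt_minimalPeriod X.op a⟩
  · rintro ⟨hn, a, rfl⟩
    refine ⟨hn, ⟨a, isPeriodicPt_minimalPeriod X.op a⟩, fun m hm ⟨z, hz⟩ => ?_⟩
    have hz' : z ∈ periodicPts X.op := mk_mem_periodicPts hm hz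
    rw [Joined.minimalPeriod_eq (hX a z) (minimalPeriod_pos_iff_mem_periodicPts.1 hn) hz']
    exact IsPeriodicPt.minimalPeriod_le hm hz

lemma unicyclic_of_minimalPeriod (hX : Connected X) (hn : 0 < n) {a : X.carrier}
    (ha : minimalPeriod X.op a = n) : Unicyclic n X :=
  ⟨hX, (hasCoreC_iff hX).2 ⟨hn, a, ha⟩⟩

lemma Unicyclic.pos (h : Unicyclic n X) : 0 < n := h.2.1

lemma Unicyclic.exists_minimalPeriod_eq (h : Unicyclic n X) :
    ∃ a, minimalPeriod X.op a = n :=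
  ((hasCoreC_iff h.1).1 h.2).2

lemma Unicyclic.nonempty (h : Unicyclic n X) : Nonempty X.carrier :=
  ⟨h.exists_minimalPeriod_eq.choose⟩

lemma Unicyclic.minimalPeriod_eq (h : Unicyclic n X) {z : X.carrier}
    (hz : z ∈ periodicPts X.op) : minimalPeriod X.op z = n := by
  obtain ⟨a, ha⟩ := h.exists_minimalPeriod_eq
  have ha' : a ∈ periodicPts X.op := minimalPeriod_pos_iff_mem_periodicPts.1 (ha ▸ h.pos)
  rw [Joined.minimalPeriod_eq (h.1 z a) hz ha', ha]

lemma Unicyclic.congr (h : Unicyclic n X) (e : Iso X Y) : Unicyclic n Y := by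
  obtain ⟨v, hv, hs⟩ := iso_iff.1 e
  obtain ⟨a, ha⟩ := h.exists_minimalPeriod_eq
  refine unicyclic_of_minimalPeriod (fun y y' => ?_) h.pos (a := v a) (hv.minimalPeriod_eq a ▸ ha)
  obtain ⟨x, rfl⟩ := hs y
  obtain ⟨x', rfl⟩ := hs y'
  exact hv.joined_iff.2 (h.1 x x')

lemma unicyclic_compAlg (hn : 0 < n) {a : X.carrier} (ha : minimalPeriod X.op a = n) :
    Unicyclic n (X.compAlg a) :=
  unicyclic_of_minimalPeriod (X.compAlg_connected a) hn (a := ⟨a, Joined.refl a⟩)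
    ((X.isEmb_compAlg_val a).minimalPeriod_eq _ ▸ ha)

lemma PathIn.succ {m : ℕ} (h : PathIn (Unicyclic n) X Y m) :
    PathIn (Unicyclic n) X Y (m + 1) :=
  h.trans (.single h.target h.target (step_self h.target.nonempty))

lemma PathIn.of_le {m k : ℕ} (h : PathIn (Unicyclic n) X Y m) (hmk : m ≤ k) :
    PathIn (Unicyclic n) X Y k := by
  induction k, hmk using Nat.le_induction with
  | base => exact h
  | succ k _ ih => exact ih.succ

end Unicyclic

/-- A `ρ`-shaped algebra: a tail leading into an `n`-cycle, generated by its first element. -/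
def IsRho (n : ℕ) (R : MonoUnary) : Prop :=
  Unicyclic n R ∧ ∃ z, ∀ y, ∃ k, R.op^[k] z = y

section LargeEmbComponents

variable {X Y : MonoUnary} {n : ℕ} {v : X.carrier → Y.carrier} {b : Y.carrier}

def compMap (hv : IsEmb v) (x : X.carrier) :
    (X.compAlg x).carrier → (Y.compAlg (v x)).carrier :=
  fun u => ⟨v u.1, hv.joined_iff.2 u.2⟩

lemma isEmb_compMap (hv : IsEmb v) (x : X.carrier) : IsEmb (compMap hv x) :=
  ⟨fun _ _ h => Subtype.ext (hv.1 (congrArg Subtype.val h)), fun u => Subtype.ext (hv.2 u.1)⟩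

lemma IsLargeEmb.compMap_cover (h : IsLargeEmb v b) (x : X.carrier)
    (y : (Y.compAlg (v x)).carrier) :
    y ∈ Set.range (compMap h.isEmb x) ∨
      ∃ hb : Y.Joined b (v x), ∃ k, (Y.compAlg (v x)).op^[k] ⟨b, hb⟩ = y := by
  rcases h.cover y.1 with ⟨u, hu⟩ | ⟨k, hk⟩
  · refine Or.inl ⟨⟨u, h.isEmb.joined_iff.1 ?_⟩, Subtype.ext hu⟩
    rw [hu]
    exact y.2
  · have hb : Y.Joined b (v x) := (joined_iterate_left b k).symm.trans (hk ▸ y.2)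
    exact Or.inr ⟨hb, k, Subtype.ext (((Y.isEmb_compAlg_val _).iterate k _).trans hk)⟩

lemma IsLargeEmb.iso_compAlg (h : IsLargeEmb v b) {x : X.carrier} (hb : ¬ Y.Joined b (v x)) :
    Iso (X.compAlg x) (Y.compAlg (v x)) :=
  iso_of_isEmb (isEmb_compMap _ x) fun y =>
    (h.compMap_cover x y).resolve_right fun ⟨hb', _⟩ => hb hb'

lemma IsLargeEmb.largeEmb_compAlg (h : IsLargeEmb v b) {x : X.carrier} (hb : Y.Joined b (v x)) :
    LargeEmb (X.compAlg x) (Y.compAlg (v x)) :=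
  largeEmb_iff.2 ⟨⟨⟨x, Joined.refl x⟩⟩, compMap h.isEmb x, ⟨b, hb⟩, isEmb_compMap _ x,
    fun y => (h.compMap_cover x y).imp_right fun ⟨_, k, hk⟩ => ⟨k, hk⟩⟩

lemma IsLargeEmb.pathIn_compAlg_zero (h : IsLargeEmb v b) (hn : 0 < n) {x : X.carrier}
    (hx : minimalPeriod X.op x = n) (hb : ¬ Y.Joined b (v x)) :
    PathIn (Unicyclic n) (X.compAlg x) (Y.compAlg (v x)) 0 :=
  .nil (unicyclic_compAlg hn hx) (unicyclic_compAlg hn ((h.isEmb.minimalPeriod_eq x).trans hx))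
    (h.iso_compAlg hb)

lemma IsLargeEmb.pathIn_compAlg_one (h : IsLargeEmb v b) (hn : 0 < n) {x : X.carrier}
    (hx : minimalPeriod X.op x = n) : PathIn (Unicyclic n) (X.compAlg x) (Y.compAlg (v x)) 1 := by
  by_cases hb : Y.Joined b (v x)
  · exact .single (unicyclic_compAlg hn hx)
      (unicyclic_compAlg hn ((h.isEmb.minimalPeriod_eq x).trans hx))
      (Or.inl (h.largeEmb_compAlg hb))
  · exact (h.pathIn_compAlg_zero hn hx hb).succ

lemma IsLargeEmb.isRho_compAlg (h : IsLargeEmb v b) (hn : 0 < n) {a : Y.carrier}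
    (ha : minimalPeriod Y.op a = n) (hna : a ∉ Set.range v) :
    Y.Joined b a ∧ IsRho n (Y.compAlg a) := by
  have haper : a ∈ periodicPts Y.op := minimalPeriod_pos_iff_mem_periodicPts.1 (ha ▸ hn)
  have hgen : ∀ z ∈ Y.component a, ∃ k, Y.op^[k] b = z := by
    intro z hz
    refine (h.cover z).resolve_left ?_
    rintro ⟨u, rfl⟩
    exact hna (h.isEmb.mem_range_of_joined haper hz)
  obtain ⟨k, hk⟩ := hgen a (Joined.refl a)
  have hb : Y.Joined b a := ⟨k, 0, hk⟩
  refine ⟨hb, unicyclic_compAlg hn ha, ⟨b, hb⟩, fun z => ?_⟩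
  obtain ⟨k, hk⟩ := hgen z.1 z.2
  exact ⟨k, Subtype.ext (((Y.isEmb_compAlg_val a).iterate k _).trans hk)⟩

end LargeEmbComponents

section Rho

variable {X R R' : MonoUnary} {n : ℕ}

lemma Unicyclic.exists_isPreperiod (h : Unicyclic n X) (w : X.carrier) :
    ∃ ℓ, IsPreperiod X.op w ℓ := by
  obtain ⟨a, ha⟩ := h.exists_minimalPeriod_eq
  obtain ⟨k, m, hkm⟩ := h.1 w a
  refine Function.exists_isPreperiod ⟨k, hkm ▸ mk_mem_periodicPts h.pos ?_⟩
  exact (ha ▸ isPeriodicPt_minimalPeriod X.op a).apply_iterate m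

lemma exists_isEmb_of_iterate_eq_iff {z' : R'.carrier} {w : R.carrier}
    (hz' : ∀ y, ∃ k, R'.op^[k] z' = y)
    (h : ∀ i j, R'.op^[i] z' = R'.op^[j] z' ↔ R.op^[i] w = R.op^[j] w) :
    ∃ v : R'.carrier → R.carrier, IsEmb v := by
  choose idx hidx using hz'
  refine ⟨fun y => R.op^[idx y] w, fun y y' hyy => ?_, fun y => ?_⟩
  · rw [← hidx y, ← hidx y']
    exact (h _ _).2 hyy
  · change R.op^[idx (R'.op y)] w = R.op (R.op^[idx y] w)
    rw [← iterate_succ_apply' R.op, ← h, iterate_succ_apply', hidx, hidx]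

/-- Send `z'` to the point `ℓ - ℓ'` steps along the orbit of `z`; then `z` is the extra
generator. -/
lemma largeEmb_of_isPreperiod_le (hR : Unicyclic n R) (hR' : Unicyclic n R')
    {z : R.carrier} {z' : R'.carrier} (hz : ∀ y, ∃ k, R.op^[k] z = y)
    (hz' : ∀ y, ∃ k, R'.op^[k] z' = y) {ℓ ℓ' : ℕ} (hℓ : IsPreperiod R.op z ℓ)
    (hℓ' : IsPreperiod R'.op z' ℓ') (hle : ℓ' ≤ ℓ) : LargeEmb R' R := by
  have hw := hℓ.iterate (Nat.sub_le ℓ ℓ')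
  rw [Nat.sub_sub_self hle] at hw
  obtain ⟨v, hv⟩ := exists_isEmb_of_iterate_eq_iff (w := R.op^[ℓ - ℓ'] z) hz' fun i j => by
    rw [hℓ'.iterate_eq_iterate_iff, hw.iterate_eq_iterate_iff, hR'.minimalPeriod_eq hℓ'.1,
      hR.minimalPeriod_eq hw.1]
  exact largeEmb_iff.2 ⟨hR'.nonempty, v, z, hv, fun y => Or.inr (hz y)⟩

lemma IsRho.step (hR : IsRho n R) (hR' : IsRho n R') : Step R R' := by
  obtain ⟨hR, z, hz⟩ := hR
  obtain ⟨hR', z', hz'⟩ := hR'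
  obtain ⟨ℓ, hℓ⟩ := hR.exists_isPreperiod z
  obtain ⟨ℓ', hℓ'⟩ := hR'.exists_isPreperiod z'
  rcases le_total ℓ' ℓ with hle | hle
  · exact Or.inr (largeEmb_of_isPreperiod_le hR hR' hz hz' hℓ hℓ' hle)
  · exact Or.inl (largeEmb_of_isPreperiod_le hR' hR hz' hz hℓ' hℓ hle)

end Rho

section Normalization

variable {X X₀ Y K K' : MonoUnary} {n j m : ℕ}

def NearRho (n β : ℕ) (K : MonoUnary) : Prop :=
  ∃ R, IsRho n R ∧ PathIn (Unicyclic n) R K β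

lemma NearRho.trans {β γ : ℕ} (h : NearRho n β K) (hp : PathIn (Unicyclic n) K K' γ) :
    NearRho n (β + γ) K' :=
  let ⟨R, hR, hRK⟩ := h
  ⟨R, hR, hRK.trans hp⟩

lemma IsRho.nearRho (hR : IsRho n K) : NearRho n 0 K :=
  ⟨K, hR, .nil hR.1 hR.1 (Iso.refl K)⟩

/-- The invariant carried along a path `X₀, …, X` of length `j`. While the component of the
cycle of `X₀` survives, it is tracked and reached from `X₀` in `α ≤ j` steps (first case);
once the path swallows it, it has become a `ρ`-algebra (second case). Every other cycle
component of `X` appeared as a `ρ`-algebra at a later stage, and is correspondingly close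
to one. -/
def Tracked (n : ℕ) (X₀ X : MonoUnary) (j : ℕ) : Prop :=
  (∃ α ≤ j, ∃ a, minimalPeriod X.op a = n ∧ PathIn (Unicyclic n) X₀ (X.compAlg a) α ∧
    ∀ a', minimalPeriod X.op a' = n → ¬ X.Joined a' a →
      ∃ β, α + β + 1 ≤ j ∧ NearRho n β (X.compAlg a')) ∨
  (∃ α, α + 1 ≤ j ∧ NearRho n α X₀ ∧
    ∀ a', minimalPeriod X.op a' = n → ∃ β, α + β + 1 ≤ j ∧ NearRho n β (X.compAlg a'))

lemma tracked_self (hX₀ : Unicyclic n X₀) : Tracked n X₀ X₀ 0 := by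
  obtain ⟨a, ha⟩ := hX₀.exists_minimalPeriod_eq
  exact Or.inl ⟨0, le_rfl, a, ha,
    .nil hX₀ (unicyclic_compAlg hX₀.pos ha) (iso_compAlg hX₀.1 a).symm,
    fun a' _ hj => absurd (hX₀.1 a' a) hj⟩

lemma Tracked.of_isLargeEmb (hn : 0 < n) {v : X.carrier → Y.carrier} {b : Y.carrier}
    (h : IsLargeEmb v b) (hT : Tracked n X₀ X j) : Tracked n X₀ Y (j + 1) := by
  have hper : ∀ {x}, minimalPeriod Y.op (v x) = n ↔ minimalPeriod X.op x = n := by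
    intro x
    rw [h.isEmb.minimalPeriod_eq]
  have hnew : ∀ {a'}, minimalPeriod Y.op a' = n → a' ∉ Set.range v →
      Y.Joined b a' ∧ NearRho n 0 (Y.compAlg a') := fun ha' hr =>
    (h.isRho_compAlg hn ha' hr).imp_right IsRho.nearRho
  rcases hT with ⟨α, hα, a, ha, hp, hothers⟩ | ⟨α, hα, h₀, hothers⟩
  · by_cases hb : Y.Joined b (v a)
    · refine Or.inl ⟨α + 1, by omega, v a, hper.2 ha, hp.trans (h.pathIn_compAlg_one hn ha),
        fun a' ha' hj => ?_⟩
      by_cases hr : a' ∈ Set.range v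
      · obtain ⟨a₀, rfl⟩ := hr
        obtain ⟨β, hβ, hK⟩ := hothers a₀ (hper.1 ha') (mt h.isEmb.joined_iff.2 hj)
        have hb₀ : ¬ Y.Joined b (v a₀) := fun hb₀ => hj (hb₀.symm.trans hb)
        exact ⟨β, by omega, hK.trans (h.pathIn_compAlg_zero hn (hper.1 ha') hb₀)⟩
      · exact absurd ((hnew ha' hr).1.symm.trans hb) hj
    · refine Or.inl ⟨α, hα.trans j.le_succ, v a, hper.2 ha,
        hp.trans (h.pathIn_compAlg_zero hn ha hb), fun a' ha' hj => ?_⟩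
      by_cases hr : a' ∈ Set.range v
      · obtain ⟨a₀, rfl⟩ := hr
        obtain ⟨β, hβ, hK⟩ := hothers a₀ (hper.1 ha') (mt h.isEmb.joined_iff.2 hj)
        exact ⟨β + 1, by omega, hK.trans (h.pathIn_compAlg_one hn (hper.1 ha'))⟩
      · exact ⟨0, by omega, (hnew ha' hr).2⟩
  · refine Or.inr ⟨α, by omega, h₀, fun a' ha' => ?_⟩
    by_cases hr : a' ∈ Set.range v
    · obtain ⟨a₀, rfl⟩ := hr
      obtain ⟨β, hβ, hK⟩ := hothers a₀ (hper.1 ha')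
      exact ⟨β + 1, by omega, hK.trans (h.pathIn_compAlg_one hn (hper.1 ha'))⟩
    · exact ⟨0, by omega, (hnew ha' hr).2⟩

lemma Tracked.of_isLargeEmb_symm (hn : 0 < n) {v : Y.carrier → X.carrier} {b : X.carrier}
    (h : IsLargeEmb v b) (hT : Tracked n X₀ X j) : Tracked n X₀ Y (j + 1) := by
  have hper : ∀ {y}, minimalPeriod X.op (v y) = n ↔ minimalPeriod Y.op y = n := by
    intro y
    rw [h.isEmb.minimalPeriod_eq]
  have hback : ∀ {a' β}, minimalPeriod Y.op a' = n → NearRho n β (X.compAlg (v a')) →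
      NearRho n (β + 1) (Y.compAlg a') := fun ha' hK =>
    hK.trans (h.pathIn_compAlg_one hn ha').symm
  rcases hT with ⟨α, hα, a, ha, hp, hothers⟩ | ⟨α, hα, h₀, hothers⟩
  · by_cases hr : a ∈ Set.range v
    · obtain ⟨a₀, rfl⟩ := hr
      by_cases hb : X.Joined b (v a₀)
      · refine Or.inl ⟨α + 1, by omega, a₀, hper.1 ha,
          hp.trans (h.pathIn_compAlg_one hn (hper.1 ha)).symm, fun a' ha' hj => ?_⟩
        obtain ⟨β, hβ, hK⟩ := hothers (v a') (hper.2 ha') (mt h.isEmb.joined_iff.1 hj)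
        have hb' : ¬ X.Joined b (v a') := fun hb' =>
          hj (h.isEmb.joined_iff.1 (hb'.symm.trans hb))
        exact ⟨β, by omega, hK.trans (h.pathIn_compAlg_zero hn ha' hb').symm⟩
      · refine Or.inl ⟨α, hα.trans j.le_succ, a₀, hper.1 ha,
          hp.trans (h.pathIn_compAlg_zero hn (hper.1 ha) hb).symm, fun a' ha' hj => ?_⟩
        obtain ⟨β, hβ, hK⟩ := hothers (v a') (hper.2 ha') (mt h.isEmb.joined_iff.1 hj)
        exact ⟨β + 1, by omega, hback ha' hK⟩
    · have haper : a ∈ periodicPts X.op := minimalPeriod_pos_iff_mem_periodicPts.1 (ha ▸ hn)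
      refine Or.inr ⟨α, by omega, by simpa using (h.isRho_compAlg hn ha hr).2.nearRho.trans hp.symm,
        fun a' ha' => ?_⟩
      obtain ⟨β, hβ, hK⟩ :=
        hothers (v a') (hper.2 ha') fun hj => hr (h.isEmb.mem_range_of_joined haper hj)
      exact ⟨β + 1, by omega, hback ha' hK⟩
  · refine Or.inr ⟨α, by omega, h₀, fun a' ha' => ?_⟩
    obtain ⟨β, hβ, hK⟩ := hothers (v a') (hper.2 ha')
    exact ⟨β + 1, by omega, hback ha' hK⟩

lemma Tracked.step (hn : 0 < n) (hT : Tracked n X₀ X j) (hs : Step X Y) :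
    Tracked n X₀ Y (j + 1) := by
  rcases hs with h | h <;> obtain ⟨-, v, b, h⟩ := largeEmb_iff.1 h
  · exact hT.of_isLargeEmb hn h
  · exact hT.of_isLargeEmb_symm hn h

lemma Tracked.pathIn (hT : Tracked n X₀ X j) (hX : Unicyclic n X) :
    PathIn (Unicyclic n) X₀ X j := by
  rcases hT with ⟨α, hα, a, -, hp, -⟩ | ⟨α, hα, ⟨R₀, hR₀, hp₀⟩, hothers⟩
  · exact (hp.congr_right (iso_compAlg hX.1 a) hX).of_le hα
  · obtain ⟨a, ha⟩ := hX.exists_minimalPeriod_eq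
    obtain ⟨β, hβ, R, hR, hp⟩ := hothers a ha
    have hR₀R : PathIn (Unicyclic n) R₀ R 1 := .single hR₀.1 hR.1 (hR₀.step hR)
    exact ((hp₀.symm.trans hR₀R).trans (hp.congr_right (iso_compAlg hX.1 a) hX)).of_le
      (by omega)

lemma Tracked.pathIn_of_pathIn {k : ℕ} (hn : 0 < n) (hT : Tracked n X₀ X j)
    (hp : PathIn (fun _ => True) X Y k) (hY : Unicyclic n Y) :
    PathIn (Unicyclic n) X₀ Y (j + k) := by
  induction hp generalizing j with
  | nil _ _ e => exact (hT.pathIn (hY.congr e.symm)).congr_right e hY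
  | @cons _ _ _ k _ hs _ ih =>
    rw [show j + (k + 1) = j + 1 + k by omega]
    exact ih (hT.step hn hs) hY

theorem pathIn_unicyclic_of_hasPath (hX : Unicyclic n X) (hY : Unicyclic n Y)
    (h : HasPath X Y m) : PathIn (Unicyclic n) X Y m := by
  simpa using (tracked_self hX).pathIn_of_pathIn hX.pos (hasPath_iff_pathIn.1 h) hY

end Normalization

section Cycles

variable {X : MonoUnary} {n : ℕ} [NeZero n]

def IsCycle (r : Fin n → X.carrier) : Prop :=
  Injective r ∧ ∀ i, X.op (r i) = r (i + 1)

variable {r : Fin n → X.carrier}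

lemma IsCycle.iterate (hr : IsCycle r) (i : Fin n) (m : ℕ) : X.op^[m] (r i) = r (i + m) := by
  induction m with
  | zero => simp
  | succ m ih =>
    rw [iterate_succ_apply', ih, hr.2, Nat.cast_succ, add_assoc]

lemma IsCycle.minimalPeriod (hr : IsCycle r) (i : Fin n) : minimalPeriod X.op (r i) = n := by
  have hper : IsPeriodicPt X.op n (r i) := by
    simp [IsPeriodicPt, IsFixedPt, hr.iterate]
  refine le_antisymm (hper.minimalPeriod_le (NeZero.pos n))
    (Nat.le_of_dvd (hper.minimalPeriod_pos (NeZero.pos n)) ?_)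
  have h := (isPeriodicPt_minimalPeriod X.op (r i)).eq
  rw [hr.iterate] at h
  exact Fin.natCast_eq_zero.1 (add_eq_left.1 (hr.1 h))

lemma unicyclic_of_isCycle (hX : Connected X) (hr : IsCycle r) : Unicyclic n X :=
  unicyclic_of_minimalPeriod hX (NeZero.pos n) (hr.minimalPeriod 0)

lemma Unicyclic.exists_isCycle (h : Unicyclic n X) : ∃ r : Fin n → X.carrier, IsCycle r := by
  obtain ⟨a, ha⟩ := h.exists_minimalPeriod_eq
  refine ⟨fun i => X.op^[i] a, fun i j hij => Fin.ext ?_, fun i => ?_⟩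
  · exact iterate_injOn_Iio_minimalPeriod (ha ▸ i.2 : (i : ℕ) ∈ Set.Iio _) (ha ▸ j.2) hij
  · change X.op (X.op^[i] a) = X.op^[((i + 1 : Fin n) : ℕ)] a
    rw [← iterate_succ_apply' X.op, ← iterate_mod_minimalPeriod_eq, ha,
      ← iterate_mod_minimalPeriod_eq (n := ((i + 1 : Fin n) : ℕ)), ha]
    simp [Fin.val_add, Nat.add_mod]

lemma IsCycle.mem_range_of_mem_periodicPts (hX : Connected X) (hr : IsCycle r) {z : X.carrier}
    (hz : z ∈ periodicPts X.op) : z ∈ Set.range r := by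
  obtain ⟨k, rfl⟩ := Joined.exists_iterate_eq (hX (r 0) z) hz
  exact ⟨_, (hr.iterate 0 k).symm⟩

end Cycles

section Trees

variable {X : MonoUnary} {n : ℕ} {r : Fin n → X.carrier}

lemma mem_treeSet_self (r : Fin n → X.carrier) (i : Fin n) : r i ∈ X.treeSet r i :=
  ⟨0, rfl, fun _ h => absurd h (Nat.not_lt_zero _)⟩

lemma eq_of_mem_treeSet (hr : Injective r) {x : X.carrier} {i j : Fin n}
    (hi : x ∈ X.treeSet r i) (hj : x ∈ X.treeSet r j) : i = j := by
  obtain ⟨k, hk, hlt⟩ := hi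
  obtain ⟨k', hk', hlt'⟩ := hj
  obtain rfl : k = k' := by
    by_contra hne
    rcases Nat.lt_or_gt_of_ne hne with h | h
    · exact hlt' k h ⟨i, hk.symm⟩
    · exact hlt k' h ⟨j, hk'.symm⟩
  exact hr (hk.symm.trans hk')

lemma exists_mem_treeSet [NeZero n] (hX : Connected X) (hr : IsCycle r) (x : X.carrier) :
    ∃ i, x ∈ X.treeSet r i := by
  classical
  have h : ∃ k, X.op^[k] x ∈ Set.range r := by
    obtain ⟨k, m, hkm⟩ := hX x (r 0)
    exact ⟨k, _, (hkm.trans (hr.iterate 0 m)).symm⟩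
  obtain ⟨i, hi⟩ := Nat.find_spec h
  exact ⟨i, Nat.find h, hi.symm, fun _ hj => Nat.find_min h hj⟩

lemma mem_treeSet_of_iterate {x : X.carrier} {t : ℕ} {i : Fin n}
    (hx : X.op^[t] x ∈ X.treeSet r i) (h : ∀ t' < t, X.op^[t'] x ∉ Set.range r) :
    x ∈ X.treeSet r i := by
  obtain ⟨k, hk, hlt⟩ := hx
  refine ⟨k + t, by rwa [iterate_add_apply], fun j hj => ?_⟩
  by_cases hjt : j < t
  · exact h j hjt
  · rw [show j = (j - t) + t by omega, iterate_add_apply]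
    exact hlt _ (by omega)

def treeRoot (r : Fin n → X.carrier) (i : Fin n) : (X.treeComp r i).carrier :=
  ⟨r i, mem_treeSet_self r i⟩

variable {i : Fin n}

lemma treeComp_op_root : (X.treeComp r i).op (treeRoot r i) = treeRoot r i :=
  dif_pos rfl

lemma treeComp_op_val_of_ne {x : (X.treeComp r i).carrier} (hx : x.1 ≠ r i) :
    ((X.treeComp r i).op x).1 = X.op x.1 :=
  congrArg Subtype.val (dif_neg hx)

lemma treeComp_iterate_val {x : (X.treeComp r i).carrier} {m : ℕ}
    (h : ∀ t < m, X.op^[t] x.1 ≠ r i) : ((X.treeComp r i).op^[m] x).1 = X.op^[m] x.1 := by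
  induction m with
  | zero => rfl
  | succ m ih =>
    have hm := ih fun t ht => h t (by omega)
    rw [iterate_succ_apply', iterate_succ_apply', treeComp_op_val_of_ne (hm ▸ h m m.lt_succ_self),
      hm]

lemma treeComp_exists_iterate_eq_root (x : (X.treeComp r i).carrier) :
    ∃ k, (X.treeComp r i).op^[k] x = treeRoot r i := by
  obtain ⟨k, hk, hlt⟩ := x.2
  refine ⟨k, Subtype.ext ?_⟩
  rw [treeComp_iterate_val fun t ht hti => hlt t ht ⟨i, hti.symm⟩]
  exact hk

lemma unicyclic_treeComp (r : Fin n → X.carrier) (i : Fin n) : Unicyclic 1 (X.treeComp r i) := by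
  refine unicyclic_of_minimalPeriod (fun x y => ?_) one_pos
    (minimalPeriod_eq_one_iff_isFixedPt.2 (treeComp_op_root (r := r) (i := i)))
  obtain ⟨k, hk⟩ := treeComp_exists_iterate_eq_root x
  obtain ⟨k', hk'⟩ := treeComp_exists_iterate_eq_root y
  exact ⟨k, k', hk.trans hk'.symm⟩

end Trees

section Fixed

variable {X Y : MonoUnary}

lemma eq_of_isFixedPt (hX : Connected X) {x y : X.carrier} (hx : X.op x = x) (hy : X.op y = y) :
    x = y := by
  obtain ⟨k, m, h⟩ := hX x y
  rwa [iterate_fixed hx, iterate_fixed hy] at h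

lemma IsEmb.map_fixed {v : X.carrier → Y.carrier} (hv : IsEmb v) (hY : Connected Y)
    {x : X.carrier} {y : Y.carrier} (hx : X.op x = x) (hy : Y.op y = y) : v x = y :=
  eq_of_isFixedPt hY (by rw [← hv.2, hx]) hy

lemma Unicyclic.exists_fixed (h : Unicyclic 1 X) : ∃ x, X.op x = x :=
  let ⟨a, ha⟩ := h.exists_minimalPeriod_eq
  ⟨a, minimalPeriod_eq_one_iff_isFixedPt.1 ha⟩

end Fixed

section Glue

variable {n : ℕ}

structure PointedAlg where
  alg : MonoUnary
  pt : alg.carrier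

/-- A tree algebra, pointed at its root. -/
def Rooted (P : PointedAlg) : Prop :=
  Unicyclic 1 P.alg ∧ P.alg.op P.pt = P.pt

variable {P Q : Fin n → PointedAlg}

lemma exists_glueMap_family {i₀ : Fin n} (hne : ∀ i ≠ i₀, P i = Q i)
    (p : ∀ i, ((P i).alg.carrier → (Q i).alg.carrier) → Prop)
    (hv : ∃ v, IsEmb v ∧ v (P i₀).pt = (Q i₀).pt ∧ p i₀ v) :
    ∃ f : ∀ i, (P i).alg.carrier → (Q i).alg.carrier,
      (∀ i, IsEmb (f i) ∧ f i (P i).pt = (Q i).pt) ∧ (∀ i ≠ i₀, Surjective (f i)) ∧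
        p i₀ (f i₀) := by
  have h : ∀ i, ∃ g : (P i).alg.carrier → (Q i).alg.carrier,
      (IsEmb g ∧ g (P i).pt = (Q i).pt) ∧ (i ≠ i₀ → Surjective g) ∧ (i = i₀ → p i g) := by
    intro i
    by_cases hi : i = i₀
    · subst hi
      obtain ⟨v, hv, hpt, hp⟩ := hv
      exact ⟨v, ⟨hv, hpt⟩, fun h => absurd rfl h, fun _ => hp⟩
    · obtain ⟨g, hg, hs⟩ : ∃ g : (P i).alg.carrier → (Q i).alg.carrier,
          (IsEmb g ∧ g (P i).pt = (Q i).pt) ∧ Surjective g := by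
        rw [← hne i hi]
        exact ⟨id, ⟨⟨injective_id, fun _ => rfl⟩, rfl⟩, surjective_id⟩
      exact ⟨g, hg, fun _ => hs, fun h => absurd h hi⟩
  choose f hf using h
  exact ⟨f, fun i => (hf i).1, fun i hi => (hf i).2.1 hi, (hf i₀).2.2 rfl⟩

variable [NeZero n]

open Classical in
/-- The inverse of the tree decomposition: the algebras `P i` hang off an `n`-cycle formed by
their points; the operation is inherited away from the points. -/
noncomputable abbrev glue (P : Fin n → PointedAlg) : MonoUnary where
  carrier := Σ i, (P i).alg.carrier
  op z := if z.2 = (P z.1).pt then ⟨z.1 + 1, (P (z.1 + 1)).pt⟩ else ⟨z.1, (P z.1).alg.op z.2⟩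

lemma glue_op_pt (i : Fin n) : (glue P).op ⟨i, (P i).pt⟩ = ⟨i + 1, (P (i + 1)).pt⟩ :=
  if_pos rfl

lemma glue_op_of_ne {i : Fin n} {x : (P i).alg.carrier} (hx : x ≠ (P i).pt) :
    (glue P).op ⟨i, x⟩ = ⟨i, (P i).alg.op x⟩ :=
  if_neg hx

lemma glue_iterate_of_forall_ne {i : Fin n} {x : (P i).alg.carrier} {m : ℕ}
    (h : ∀ t < m, (P i).alg.op^[t] x ≠ (P i).pt) :
    (glue P).op^[m] ⟨i, x⟩ = ⟨i, (P i).alg.op^[m] x⟩ := by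
  induction m with
  | zero => rfl
  | succ m ih =>
    rw [iterate_succ_apply' (glue P).op, ih fun t ht => h t (by omega),
      glue_op_of_ne (h m m.lt_succ_self), iterate_succ_apply']

def glueMap (f : ∀ i, (P i).alg.carrier → (Q i).alg.carrier) :
    (glue P).carrier → (glue Q).carrier :=
  fun z => ⟨z.1, f z.1 z.2⟩

variable {f : ∀ i, (P i).alg.carrier → (Q i).alg.carrier}

lemma isEmb_glueMap (hf : ∀ i, IsEmb (f i) ∧ f i (P i).pt = (Q i).pt) : IsEmb (glueMap f) := by
  refine ⟨?_, ?_⟩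
  · rintro ⟨i, x⟩ ⟨j, y⟩ h
    obtain ⟨rfl, h⟩ := Sigma.mk.inj_iff.1 h
    exact congrArg (Sigma.mk i) ((hf i).1.1 (eq_of_heq h))
  · rintro ⟨i, x⟩
    by_cases hx : x = (P i).pt
    · subst hx
      change glueMap f ((glue P).op ⟨i, (P i).pt⟩) = (glue Q).op ⟨i, f i (P i).pt⟩
      rw [glue_op_pt, (hf i).2, glue_op_pt]
      exact congrArg (Sigma.mk (i + 1)) (hf (i + 1)).2
    · have hfx : f i x ≠ (Q i).pt := fun h => hx ((hf i).1.1 (h.trans (hf i).2.symm))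
      change glueMap f ((glue P).op ⟨i, x⟩) = (glue Q).op ⟨i, f i x⟩
      rw [glue_op_of_ne hx, glue_op_of_ne hfx]
      exact congrArg (Sigma.mk i) ((hf i).1.2 x)

lemma isLargeEmb_glueMap (hf : ∀ i, IsEmb (f i) ∧ f i (P i).pt = (Q i).pt) {i₀ : Fin n}
    (hsurj : ∀ i ≠ i₀, Surjective (f i)) {b : (Q i₀).alg.carrier} (hb : IsLargeEmb (f i₀) b)
    (hfix : (Q i₀).alg.op (Q i₀).pt = (Q i₀).pt) : IsLargeEmb (glueMap f) ⟨i₀, b⟩ := by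
  refine ⟨isEmb_glueMap hf, ?_⟩
  rintro ⟨i, y⟩
  by_cases hi : i = i₀
  · subst hi
    rcases hb.cover y with ⟨x, rfl⟩ | ⟨k, rfl⟩
    · exact Or.inl ⟨⟨i, x⟩, rfl⟩
    by_cases hroot : ∀ t ≤ k, (Q i).alg.op^[t] b ≠ (Q i).pt
    · exact Or.inr ⟨k, glue_iterate_of_forall_ne fun t ht => hroot t ht.le⟩
    · simp only [not_forall, not_not] at hroot
      obtain ⟨t, htk, ht⟩ := hroot
      refine Or.inl ⟨⟨i, (P i).pt⟩, congrArg (Sigma.mk i) ?_⟩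
      rw [(hf i).2, show k = (k - t) + t by omega, iterate_add_apply, ht, iterate_fixed hfix]
  · obtain ⟨x, rfl⟩ := hsurj i hi y
    exact Or.inl ⟨⟨i, x⟩, rfl⟩

lemma iso_glue {i₀ : Fin n} (hne : ∀ i ≠ i₀, P i = Q i)
    (hv : ∃ v : (P i₀).alg.carrier → (Q i₀).alg.carrier,
      IsEmb v ∧ v (P i₀).pt = (Q i₀).pt ∧ Surjective v) : Iso (glue P) (glue Q) := by
  obtain ⟨f, hf, hsurj, hsurj₀⟩ := exists_glueMap_family hne (fun _ g => Surjective g) hv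
  have hs : ∀ i, Surjective (f i) := fun i => by
    by_cases hi : i = i₀
    · subst hi
      exact hsurj₀
    · exact hsurj i hi
  refine iso_of_isEmb (isEmb_glueMap hf) fun ⟨i, y⟩ => ?_
  obtain ⟨x, rfl⟩ := hs i y
  exact ⟨⟨i, x⟩, rfl⟩

lemma largeEmb_glue {i₀ : Fin n} (hne : ∀ i ≠ i₀, P i = Q i)
    (hfix : (Q i₀).alg.op (Q i₀).pt = (Q i₀).pt)
    (hv : ∃ (v : (P i₀).alg.carrier → (Q i₀).alg.carrier) (b : (Q i₀).alg.carrier),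
      IsLargeEmb v b ∧ v (P i₀).pt = (Q i₀).pt) : LargeEmb (glue P) (glue Q) := by
  obtain ⟨v, b, hv, hpt⟩ := hv
  obtain ⟨f, hf, hsurj, b, hb⟩ :=
    exists_glueMap_family hne (fun _ g => ∃ b, IsLargeEmb g b) ⟨v, hv.isEmb, hpt, b, hv⟩
  exact largeEmb_iff.2 ⟨⟨⟨i₀, (P i₀).pt⟩⟩, _, _, isLargeEmb_glueMap hf hsurj hb hfix⟩

end Glue

section UpperBound

variable {A B : MonoUnary} {n m : ℕ} {P Q : Fin n → PointedAlg} {i₀ : Fin n}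

lemma rooted_update {Q₀ : PointedAlg} (hP : ∀ i, Rooted (P i)) (hQ₀ : Rooted Q₀) (i : Fin n) :
    Rooted (update P i₀ Q₀ i) := by
  rcases eq_or_ne i i₀ with rfl | hi
  · rwa [update_self]
  · rw [update_of_ne hi]
    exact hP i

noncomputable def treePointed (X : MonoUnary) (r : Fin n → X.carrier) (i : Fin n) : PointedAlg :=
  ⟨X.treeComp r i, treeRoot r i⟩

lemma rooted_treePointed (X : MonoUnary) (r : Fin n → X.carrier) (i : Fin n) :
    Rooted (X.treePointed r i) :=
  ⟨unicyclic_treeComp r i, treeComp_op_root⟩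

variable [NeZero n]

lemma step_glue_update {Q₀ : PointedAlg} (hP : Rooted (P i₀)) (hQ₀ : Rooted Q₀)
    (hs : Step (P i₀).alg Q₀.alg) : Step (glue P) (glue (update P i₀ Q₀)) := by
  have hne : ∀ i ≠ i₀, P i = update P i₀ Q₀ i := fun i hi => (update_of_ne hi _ _).symm
  rcases hs with h | h <;> obtain ⟨-, v, b, hv⟩ := largeEmb_iff.1 h
  · refine Or.inl (largeEmb_glue hne (by rw [update_self]; exact hQ₀.2) ?_)
    rw [update_self]
    exact ⟨v, b, hv, hv.isEmb.map_fixed hQ₀.1.1 hP.2 hQ₀.2⟩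
  · refine Or.inr (largeEmb_glue (fun i hi => (hne i hi).symm) hP.2 ?_)
    rw [update_self]
    exact ⟨v, b, hv, hv.isEmb.map_fixed hP.1.1 hQ₀.2 hP.2⟩

lemma iso_glue_update {Q₀ : PointedAlg} (hP : Rooted (P i₀)) (hQ₀ : Rooted Q₀)
    (e : Iso (P i₀).alg Q₀.alg) : Iso (glue P) (glue (update P i₀ Q₀)) := by
  refine iso_glue (fun i hi => (update_of_ne hi _ _).symm) ?_
  obtain ⟨v, hv, hs⟩ := iso_iff.1 e
  rw [update_self]
  exact ⟨v, hv, hv.map_fixed hQ₀.1.1 hP.2 hQ₀.2, hs⟩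

lemma pathIn_glue_update {Q₀ : PointedAlg} (hP : ∀ i, Rooted (P i)) (hQ₀ : Rooted Q₀)
    (h : PathIn (Unicyclic 1) (P i₀).alg Q₀.alg m) :
    PathIn (fun _ => True) (glue P) (glue (update P i₀ Q₀)) m := by
  induction m generalizing P with
  | zero =>
    cases h with
    | nil _ _ e => exact .nil trivial trivial (iso_glue_update (hP i₀) hQ₀ e)
  | succ m ih =>
    cases h with
    | @cons _ W _ _ _ hs hWQ =>
      obtain ⟨w, hw⟩ := hWQ.source.exists_fixed
      have hW : Rooted ⟨W, w⟩ := ⟨hWQ.source, hw⟩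
      have hrest := ih (rooted_update hP hW) (by rwa [update_self])
      rw [update_idem] at hrest
      exact .cons trivial (step_glue_update (hP i₀) hW hs) hrest

lemma pathIn_glue (hP : ∀ i, Rooted (P i)) (hQ : ∀ i, Rooted (Q i)) {κ : Fin n → ℕ}
    (h : ∀ i, PathIn (Unicyclic 1) (P i).alg (Q i).alg (κ i)) :
    PathIn (fun _ => True) (glue P) (glue Q) (∑ i, κ i) := by
  classical
  suffices ∀ s : Finset (Fin n),
      PathIn (fun _ => True) (glue P) (glue (s.piecewise Q P)) (∑ i ∈ s, κ i) by
    simpa using this Finset.univ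
  intro s
  induction s using Finset.induction_on with
  | empty => simpa using PathIn.nil trivial trivial (Iso.refl (glue P))
  | insert i s hi ih =>
    have hrooted : ∀ j, Rooted (s.piecewise Q P j) := fun j => by
      by_cases hj : j ∈ s
      · simpa [hj] using hQ j
      · simpa [hj] using hP j
    rw [Finset.piecewise_insert, Finset.sum_insert hi, add_comm]
    exact ih.trans (pathIn_glue_update hrooted (hQ i) (by simpa [hi] using h i))

lemma iso_glue_treePointed {r : Fin n → A.carrier} (hA : Connected A) (hr : IsCycle r)
    (k : Fin n) : Iso (glue fun i => A.treePointed r (i + k)) A := by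
  set F := fun i => A.treePointed r (i + k)
  refine iso_of_isEmb (v := fun z => z.2.1) ⟨?_, ?_⟩ ?_
  · rintro ⟨i, x⟩ ⟨j, y⟩ (h : x.1 = y.1)
    obtain rfl : i = j := add_right_cancel (eq_of_mem_treeSet hr.1 x.2 (h ▸ y.2))
    exact congrArg (Sigma.mk i) (Subtype.ext h)
  · rintro ⟨i, x⟩
    change ((glue F).op ⟨i, x⟩).2.1 = A.op x.1
    by_cases hx : x = (F i).pt
    · subst hx
      rw [glue_op_pt]
      change r (i + 1 + k) = A.op (r (i + k))
      rw [hr.2, add_right_comm]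
    · rw [glue_op_of_ne hx]
      exact treeComp_op_val_of_ne fun h => hx (Subtype.ext h)
  · intro x
    obtain ⟨i, hi⟩ := exists_mem_treeSet hA hr x
    exact ⟨⟨i - k, ⟨x, by rwa [sub_add_cancel]⟩⟩, rfl⟩

theorem dis_le_sum_dis_treeComp {rA : Fin n → A.carrier} {rB : Fin n → B.carrier}
    (hA : Connected A) (hB : Connected B) (hrA : IsCycle rA) (hrB : IsCycle rB) (k : Fin n) :
    dis A B ≤ ∑ i, dis (A.treeComp rA i) (B.treeComp rB (i + k)) := by
  by_cases hfin : ∀ i, dis (A.treeComp rA i) (B.treeComp rB (i + k)) ≠ ⊤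
  · choose κ hκ hpath using fun i => exists_hasPath_of_dis_ne_top (hfin i)
    have hglue := pathIn_glue (fun i => rooted_treePointed A rA i)
      (fun i => rooted_treePointed B rB (i + k)) fun i =>
        pathIn_unicyclic_of_hasPath (unicyclic_treeComp rA i) (unicyclic_treeComp rB (i + k))
          (hpath i)
    have hisoA : Iso (glue (A.treePointed rA)) A := by
      simpa using iso_glue_treePointed hA hrA 0
    have hAB := (hglue.congr_left hisoA.symm trivial).congr_right
      (iso_glue_treePointed hB hrB k) trivial
    calc dis A B ≤ (∑ i, κ i : ℕ) := dis_le_of_pathIn hAB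
      _ = ∑ i, dis (A.treeComp rA i) (B.treeComp rB (i + k)) := by simp [hκ]
  · obtain ⟨i, hi⟩ := not_forall_not.1 hfin
    rw [ENat.sum_eq_top.2 ⟨i, Finset.mem_univ i, hi⟩]
    exact le_top

end UpperBound

section CyclicDist

variable {n : ℕ}

noncomputable def cyclicDist (F G : Fin n → MonoUnary) : ℕ∞ :=
  ⨅ k, ∑ i, dis (F i) (G (i + k))

variable {F G H : Fin n → MonoUnary}

lemma cyclicDist_le (k : Fin n) {c : ℕ∞} (h : ∑ i, dis (F i) (G (i + k)) ≤ c) :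
    cyclicDist F G ≤ c :=
  (iInf_le _ k).trans h

lemma cyclicDist_comm_le [NeZero n] : cyclicDist F G ≤ cyclicDist G F := by
  refine le_iInf fun k => cyclicDist_le (-k) (le_of_eq ?_)
  refine Fintype.sum_equiv (Equiv.addRight (-k)) _ _ fun i => ?_
  rw [Equiv.coe_addRight, neg_add_cancel_right, dis_comm]

lemma cyclicDist_comm [NeZero n] : cyclicDist F G = cyclicDist G F :=
  le_antisymm cyclicDist_comm_le cyclicDist_comm_le

lemma cyclicDist_triangle [NeZero n] : cyclicDist F H ≤ cyclicDist F G + cyclicDist G H := by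
  obtain ⟨k₁, hk₁⟩ := exists_eq_ciInf_of_finite (f := fun k => ∑ i, dis (F i) (G (i + k)))
  obtain ⟨k₂, hk₂⟩ := exists_eq_ciInf_of_finite (f := fun k => ∑ i, dis (G i) (H (i + k)))
  rw [show cyclicDist F G = _ from hk₁.symm, show cyclicDist G H = _ from hk₂.symm]
  refine cyclicDist_le (k₁ + k₂) ?_
  calc ∑ i, dis (F i) (H (i + (k₁ + k₂)))
      ≤ ∑ i, (dis (F i) (G (i + k₁)) + dis (G (i + k₁)) (H (i + k₁ + k₂))) :=
        Finset.sum_le_sum fun i _ => by rw [← add_assoc]; exact dis_triangle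
    _ = ∑ i, dis (F i) (G (i + k₁)) + ∑ i, dis (G i) (H (i + k₂)) := by
        rw [Finset.sum_add_distrib]
        congr 1
        exact Fintype.sum_equiv (Equiv.addRight k₁) _ _ fun i => rfl

end CyclicDist

section LowerBound

variable {B C : MonoUnary} {n m : ℕ} [NeZero n] {rB : Fin n → B.carrier}
  {rC : Fin n → C.carrier} {v : B.carrier → C.carrier} {k : Fin n}

lemma IsEmb.exists_map_cycle (hv : IsEmb v) (hC : Connected C) (hrB : IsCycle rB)
    (hrC : IsCycle rC) : ∃ k, ∀ i, v (rB i) = rC (i + k) := by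
  have hper : v (rB 0) ∈ periodicPts C.op := by
    rw [← minimalPeriod_pos_iff_mem_periodicPts, hv.minimalPeriod_eq, hrB.minimalPeriod]
    exact NeZero.pos n
  obtain ⟨k, hk⟩ := hrC.mem_range_of_mem_periodicPts hC hper
  refine ⟨k, fun i => ?_⟩
  have h := hv.iterate i (rB 0)
  rwa [hrB.iterate, zero_add, Fin.cast_val_eq_self, ← hk, hrC.iterate, Fin.cast_val_eq_self,
    add_comm] at h

lemma IsEmb.mem_treeSet_iff (hv : IsEmb v) (hvr : ∀ i, v (rB i) = rC (i + k)) {x : B.carrier}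
    {i : Fin n} : v x ∈ C.treeSet rC (i + k) ↔ x ∈ B.treeSet rB i := by
  have hrange : ∀ y, v y ∈ Set.range rC ↔ y ∈ Set.range rB := fun y =>
    ⟨fun ⟨j, hj⟩ => ⟨j - k, hv.1 (by rw [hvr, sub_add_cancel, hj])⟩,
      fun ⟨j, hj⟩ => ⟨j + k, by rw [← hvr, hj]⟩⟩
  simp only [treeSet, Set.mem_ofPred_eq, ← hv.iterate, ← hvr, hv.1.eq_iff, hrange]

def treeMap (hv : IsEmb v) (hvr : ∀ i, v (rB i) = rC (i + k)) (i : Fin n) :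
    (B.treeComp rB i).carrier → (C.treeComp rC (i + k)).carrier :=
  fun x => ⟨v x.1, (hv.mem_treeSet_iff hvr).2 x.2⟩

lemma isEmb_treeMap (hv : IsEmb v) (hvr : ∀ i, v (rB i) = rC (i + k)) (i : Fin n) :
    IsEmb (treeMap hv hvr i) := by
  refine ⟨fun x y h => Subtype.ext (hv.1 (congrArg Subtype.val h)), fun x => ?_⟩
  by_cases hx : x.1 = rB i
  · have hB : (B.treeComp rB i).op x = x := dif_pos hx
    have hC : (C.treeComp rC (i + k)).op (treeMap hv hvr i x) = treeMap hv hvr i x :=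
      dif_pos (by rw [← hvr, ← hx]; rfl)
    rw [hB, hC]
  · have hvx : v x.1 ≠ rC (i + k) := fun h => hx (hv.1 (h.trans (hvr i).symm))
    exact Subtype.ext ((congrArg v (treeComp_op_val_of_ne hx)).trans ((hv.2 x.1).trans
      (treeComp_op_val_of_ne (x := treeMap hv hvr i x) hvx).symm))

lemma iso_treeComp_of_iso (e : Iso B C) (hC : Connected C) (hrB : IsCycle rB)
    (hrC : IsCycle rC) : ∃ k, ∀ i, Iso (B.treeComp rB i) (C.treeComp rC (i + k)) := by
  obtain ⟨v, hv, hs⟩ := iso_iff.1 e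
  obtain ⟨k, hvr⟩ := hv.exists_map_cycle hC hrB hrC
  refine ⟨k, fun i => iso_of_isEmb (isEmb_treeMap hv hvr i) fun y => ?_⟩
  obtain ⟨x, hx⟩ := hs y.1
  exact ⟨⟨x, (hv.mem_treeSet_iff hvr).1 (hx ▸ y.2)⟩, Subtype.ext hx⟩

/-- The points outside the image of `v` form the trajectory of `b` up to its first visit to
the image; it does not meet the cycle, so it stays in the tree of `b`. -/
lemma IsLargeEmb.treeMap_cover {b : C.carrier} (h : IsLargeEmb v b)
    (hvr : ∀ i, v (rB i) = rC (i + k)) (i : Fin n) (y : (C.treeComp rC (i + k)).carrier) :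
    y ∈ Set.range (treeMap h.isEmb hvr i) ∨
      ∃ hb : b ∈ C.treeSet rC (i + k), ∃ t, (C.treeComp rC (i + k)).op^[t] ⟨b, hb⟩ = y := by
  by_cases hy : y.1 ∈ Set.range v
  · obtain ⟨x, hx⟩ := hy
    exact Or.inl ⟨⟨x, (h.isEmb.mem_treeSet_iff hvr).1 (hx ▸ y.2)⟩, Subtype.ext hx⟩
  obtain ⟨t, ht⟩ := (h.cover y.1).resolve_left hy
  have hout : ∀ t' ≤ t, C.op^[t'] b ∉ Set.range rC := by
    rintro t' ht' ⟨j, hj⟩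
    apply hy
    rw [← ht, show t = (t - t') + t' by omega, iterate_add_apply, ← hj]
    exact h.isEmb.mapsTo_range.iterate _ ⟨rB (j - k), by rw [hvr, sub_add_cancel]⟩
  have hb : b ∈ C.treeSet rC (i + k) :=
    mem_treeSet_of_iterate (ht ▸ y.2) fun t' ht' => hout t' ht'.le
  refine Or.inr ⟨hb, t, Subtype.ext ?_⟩
  exact (treeComp_iterate_val (x := (⟨b, hb⟩ : (C.treeComp rC (i + k)).carrier))
    fun t' ht' h' => hout t' ht'.le ⟨_, h'.symm⟩).trans ht

lemma IsLargeEmb.dis_treeComp_le {b : C.carrier} (h : IsLargeEmb v b)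
    (hvr : ∀ i, v (rB i) = rC (i + k)) (i : Fin n) [Decidable (b ∈ C.treeSet rC (i + k))] :
    dis (B.treeComp rB i) (C.treeComp rC (i + k)) ≤
      if b ∈ C.treeSet rC (i + k) then 1 else 0 := by
  split_ifs with hb
  · refine dis_le_of_pathIn (PathIn.single (P := fun _ => True) trivial trivial (Or.inl ?_))
    exact largeEmb_iff.2 ⟨⟨treeRoot rB i⟩, treeMap h.isEmb hvr i, ⟨b, hb⟩,
      isEmb_treeMap h.isEmb hvr i,
      fun y => (h.treeMap_cover hvr i y).imp_right fun ⟨_, t, ht⟩ => ⟨t, ht⟩⟩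
  · refine dis_le_of_pathIn (PathIn.nil (P := fun _ => True) trivial trivial ?_)
    exact iso_of_isEmb (isEmb_treeMap h.isEmb hvr i) fun y =>
      (h.treeMap_cover hvr i y).resolve_right fun ⟨hb', _⟩ => hb hb'

/-- A large embedding changes exactly one tree, that of the new generator, by one step. -/
lemma IsLargeEmb.exists_sum_dis_treeComp_le_one {b : C.carrier} (h : IsLargeEmb v b)
    (hC : Connected C) (hrB : IsCycle rB) (hrC : IsCycle rC) :
    ∃ k, ∑ i, dis (B.treeComp rB i) (C.treeComp rC (i + k)) ≤ 1 := by
  classical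
  obtain ⟨k, hvr⟩ := h.isEmb.exists_map_cycle hC hrB hrC
  obtain ⟨i₀, hi₀⟩ := exists_mem_treeSet hC hrC b
  have hiff : ∀ i, b ∈ C.treeSet rC (i + k) ↔ i = i₀ - k := fun i =>
    ⟨fun hb => eq_sub_of_add_eq (eq_of_mem_treeSet hrC.1 hb hi₀),
      fun hi => by rwa [hi, sub_add_cancel]⟩
  refine ⟨k, ?_⟩
  calc ∑ i, dis (B.treeComp rB i) (C.treeComp rC (i + k))
      ≤ ∑ i, if i = i₀ - k then (1 : ℕ∞) else 0 :=
        Finset.sum_le_sum fun i _ => (h.dis_treeComp_le hvr i).trans_eq (if_congr (hiff i) rfl rfl)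
    _ = 1 := by simp

lemma cyclicDist_treeComp_le_one (hB : Connected B) (hC : Connected C) (hs : Step B C)
    (hrB : IsCycle rB) (hrC : IsCycle rC) : cyclicDist (B.treeComp rB) (C.treeComp rC) ≤ 1 := by
  rcases hs with h | h <;> obtain ⟨-, v, b, hv⟩ := largeEmb_iff.1 h
  · obtain ⟨k, hk⟩ := hv.exists_sum_dis_treeComp_le_one hC hrB hrC
    exact cyclicDist_le k hk
  · obtain ⟨k, hk⟩ := hv.exists_sum_dis_treeComp_le_one hB hrC hrB
    rw [cyclicDist_comm]
    exact cyclicDist_le k hk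

theorem cyclicDist_treeComp_le_of_pathIn (h : PathIn (Unicyclic n) B C m) (hrB : IsCycle rB)
    (hrC : IsCycle rC) : cyclicDist (B.treeComp rB) (C.treeComp rC) ≤ m := by
  induction h with
  | nil _ hC e =>
    obtain ⟨k, hk⟩ := iso_treeComp_of_iso e hC.1 hrB hrC
    refine cyclicDist_le k (le_of_eq ?_)
    exact Finset.sum_eq_zero fun i _ => nonpos_iff_eq_zero.1
      (dis_le_of_pathIn (PathIn.nil (P := fun _ => True) trivial trivial (hk i)))
  | @cons _ W _ m hB hs hp ih =>
    obtain ⟨rW, hrW⟩ := hp.source.exists_isCycle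
    refine (cyclicDist_triangle (G := W.treeComp rW)).trans ?_
    rw [Nat.cast_succ, add_comm (m : ℕ∞)]
    exact add_le_add (cyclicDist_treeComp_le_one hB.1 hp.source.1 hs hrB hrW) (ih hrW hrC)

end LowerBound

end MonoUnary

open MonoUnary in
theorem dis_of_tree_decomposition_general (n : ℕ) [NeZero n] (A B : MonoUnary)
    (hAconn : Connected A) (hBconn : Connected B)
    (rA : Fin n → A.carrier) (rB : Fin n → B.carrier)
    (hrAinj : Function.Injective rA) (hrBinj : Function.Injective rB)
    (hrA : ∀ i, A.op (rA i) = rA (i + 1)) (hrB : ∀ i, B.op (rB i) = rB (i + 1)) :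
    dis A B = ⨅ k : Fin n, ∑ i : Fin n, dis (treeComp A rA i) (treeComp B rB (i + k)) := by
  have hcA : IsCycle rA := ⟨hrAinj, hrA⟩
  have hcB : IsCycle rB := ⟨hrBinj, hrB⟩
  refine le_antisymm (le_iInf fun k => dis_le_sum_dis_treeComp hAconn hBconn hcA hcB k)
    (le_dis fun m hm => ?_)
  exact cyclicDist_treeComp_le_of_pathIn (pathIn_unicyclic_of_hasPath
    (unicyclic_of_isCycle hAconn hcA) (unicyclic_of_isCycle hBconn hcB) hm) hcA hcB

open MonoUnary in
/-- for connected monounary algebras `A`, `B` with cores isomorphic to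
`C_n` (`n` positive), with compatibly indexed tree-algebra decompositions along the
cycles `rA`, `rB`, the distance equals the minimum over cyclic shifts `k < n` of
`Σ_{i<n} dis (T^A_i) (T^B_{(i+k) mod n})`. -/
theorem dis_of_tree_decomposition (n : ℕ) [NeZero n] (A B : MonoUnary)
    (hAconn : Connected A) (hBconn : Connected B)
    (hAcore : HasCoreC A n) (hBcore : HasCoreC B n)
    (rA : Fin n → A.carrier) (rB : Fin n → B.carrier)
    (hrAinj : Function.Injective rA) (hrBinj : Function.Injective rB)
    (hrA : ∀ i, A.op (rA i) = rA (i + 1)) (hrB : ∀ i, B.op (rB i) = rB (i + 1)) :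
    dis A B = ⨅ k : Fin n, ∑ i : Fin n, dis (treeComp A rA i) (treeComp B rB (i + k)) :=
  dis_of_tree_decomposition_general n A B hAconn hBconn rA rB hrAinj hrBinj hrA hrB
end

section
/- Suppose the class K of L-structures is closed under substructures and A, B ∈ K have dis(A,B) < ∞. (1) If K has the push-up property, then there exist D ∈ K and n, m ∈ ℕ such that A ⋖^m D, B ⋖^n D, and dis(A,B) = n + m. (2) If K has the push-down property, then there exist C ∈ K and n, m ∈ ℕ such that C ⋖^m A, C ⋖^n B, and dis(A,B) = n + m. -/
open FirstOrder

/-- Bundled `L`-structures. -/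
abbrev StructCat (L : FirstOrder.Language) := CategoryTheory.Bundled L.Structure

instance {L : FirstOrder.Language} (M : StructCat L) : L.Structure M := M.str

namespace StructCat

variable {L : FirstOrder.Language}

/-- A substructure `S` of an `L`-structure `M` is large iff some single extra element
`b` together with `S` generates all of `M`. -/
def IsLargeSub {M : Type*} [L.Structure M] (S : L.Substructure M) : Prop :=
  ∃ b : M, Language.Substructure.closure L (↑S ∪ {b}) = ⊤

/-- `A` is largely embeddable into `B` in the class `K`: some substructure of `B`
belonging to `K` is isomorphic to `A` and is large in `B`. -/
def LargeEmb (K : Set (StructCat L)) (A B : StructCat L) : Prop :=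
  ∃ S : L.Substructure B, (⟨↥S, inferInstance⟩ : StructCat L) ∈ K ∧
    Nonempty (A ≃[L] ↥S) ∧ IsLargeSub S

/-- There is a path of length `n` between `A` and `B` in the network of large
embeddings of the class `K`. -/
def HasPath (K : Set (StructCat L)) (A B : StructCat L) (n : ℕ) : Prop :=
  ∃ C : ℕ → StructCat L, (∀ i ≤ n, C i ∈ K) ∧
    Nonempty ((C 0) ≃[L] A) ∧ Nonempty ((C n) ≃[L] B) ∧
    ∀ i < n, LargeEmb K (C i) (C (i + 1)) ∨ LargeEmb K (C (i + 1)) (C i)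

/-- The generator distance in the class `K`, in `ℕ ∪ {∞}`. -/
noncomputable def dis (K : Set (StructCat L)) (A B : StructCat L) : ℕ∞ :=
  sInf {q : ℕ∞ | ∃ n : ℕ, q = (n : ℕ∞) ∧ HasPath K A B n}

/-- `K` is closed under (the formation of) substructures. -/
def ClosedUnderSub (K : Set (StructCat L)) : Prop :=
  ∀ B : StructCat L, B ∈ K → ∀ S : L.Substructure B, (⟨↥S, inferInstance⟩ : StructCat L) ∈ K

/-- `K` has the push-up property. -/
def PushUp (K : Set (StructCat L)) : Prop :=
  ∀ A B : StructCat L, A ∈ K → B ∈ K →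
    (∃ C : StructCat L, C ∈ K ∧ LargeEmb K C A ∧ LargeEmb K C B) →
    ∃ D : StructCat L, D ∈ K ∧ LargeEmb K A D ∧ LargeEmb K B D

/-- `K` has the push-down property. -/
def PushDown (K : Set (StructCat L)) : Prop :=
  ∀ A B : StructCat L, A ∈ K → B ∈ K →
    (∃ D : StructCat L, D ∈ K ∧ LargeEmb K A D ∧ LargeEmb K B D) →
    ∃ C : StructCat L, C ∈ K ∧ LargeEmb K C A ∧ LargeEmb K C B

end StructCat

namespace StructCat

variable {L : FirstOrder.Language}

/-- `A ⋖^m B` in `K`: a chain of `m` large embeddings in `K` from (a copy of) `A`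
to (a copy of) `B`. -/
def ChainUp (K : Set (StructCat L)) (A B : StructCat L) (m : ℕ) : Prop :=
  ∃ C : ℕ → StructCat L, (∀ i ≤ m, C i ∈ K) ∧
    Nonempty ((C 0) ≃[L] A) ∧ Nonempty ((C m) ≃[L] B) ∧
    ∀ i < m, LargeEmb K (C i) (C (i + 1))

end StructCat

namespace StructCat

universe x y w

variable {L : FirstOrder.Language.{x, y}} {K : Set (StructCat.{x, y, w} L)}

theorem largeEmb_congr_left {A A' B : StructCat.{x, y, w} L} (e : Nonempty (A ≃[L] A'))
    (h : LargeEmb K A B) : LargeEmb K A' B := by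
  obtain ⟨S, hS, ⟨i⟩, hl⟩ := h
  exact ⟨S, hS, ⟨i.comp e.some.symm⟩, hl⟩

theorem largeEmb_congr_right (hK : ClosedUnderSub K) {A B B' : StructCat.{x, y, w} L}
    (hB' : B' ∈ K) (e : Nonempty (B ≃[L] B')) (h : LargeEmb K A B) : LargeEmb K A B' := by
  obtain ⟨S, hS, ⟨i⟩, b, hb⟩ := h
  obtain ⟨f⟩ := e
  refine ⟨S.map f.toEmbedding.toHom, hK B' hB' _,
    ⟨(f.toEmbedding.substructureEquivMap S).comp i⟩, f b, ?_⟩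
  have himg : (↑(S.map f.toEmbedding.toHom) : Set B') ∪ {f b}
      = f.toEmbedding.toHom '' ((↑S : Set B) ∪ {b}) := by
    rw [Set.image_union, Set.image_singleton]
    rfl
  rw [himg, Language.Substructure.closure_image, hb]
  rw [← Language.Hom.range_eq_map]
  rw [Language.Hom.range_eq_top]
  intro x
  exact ⟨f.symm x, f.apply_symm_apply x⟩

theorem chainUp_of_iso {A B : StructCat.{x, y, w} L} (hA : A ∈ K) (e : Nonempty (A ≃[L] B)) :
    ChainUp K A B 0 :=
  ⟨fun _ => A, fun _ _ => hA, ⟨Language.Equiv.refl L A⟩, e,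
    fun i h => absurd h (Nat.not_lt_zero i)⟩

theorem chainUp_congr_left {A A' B : StructCat.{x, y, w} L} {m : ℕ} (e : Nonempty (A ≃[L] A'))
    (h : ChainUp K A B m) : ChainUp K A' B m := by
  obtain ⟨C, hC, ⟨i0⟩, im, hst⟩ := h
  exact ⟨C, hC, ⟨e.some.comp i0⟩, im, hst⟩

theorem chainUp_congr_right {A B B' : StructCat.{x, y, w} L} {m : ℕ} (e : Nonempty (B ≃[L] B'))
    (h : ChainUp K A B m) : ChainUp K A B' m := by
  obtain ⟨C, hC, i0, ⟨im⟩, hst⟩ := h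
  exact ⟨C, hC, i0, ⟨e.some.comp im⟩, hst⟩

theorem chainUp_prepend (hK : ClosedUnderSub K) {A B D : StructCat.{x, y, w} L} {k : ℕ}
    (hA : A ∈ K) (h1 : LargeEmb K A B) (h2 : ChainUp K B D k) : ChainUp K A D (k + 1) := by
  obtain ⟨E, hE, ⟨i0⟩, ik, hst⟩ := h2
  refine ⟨fun i => match i with | 0 => A | j + 1 => E j, ?_, ⟨Language.Equiv.refl L A⟩, ik, ?_⟩
  · intro i hi
    match i with
    | 0 => exact hA
    | j + 1 => exact hE j (by omega)
  · intro i hi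
    match i with
    | 0 => exact largeEmb_congr_right hK (hE 0 (by omega)) ⟨i0.symm⟩ h1
    | j + 1 => exact hst j (by omega)

theorem chainUp_append (hK : ClosedUnderSub K) {A D B : StructCat.{x, y, w} L} {m : ℕ}
    (h1 : ChainUp K A D m) (h2 : LargeEmb K D B) (hB : B ∈ K) : ChainUp K A B (m + 1) := by
  obtain ⟨E, hE, i0, ⟨im⟩, hst⟩ := h1
  refine ⟨fun i => if i ≤ m then E i else B, ?_, ?_, ?_, ?_⟩
  · intro i hi
    beta_reduce
    by_cases h : i ≤ m
    · rw [if_pos h]; exact hE i h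
    · rw [if_neg h]; exact hB
  · beta_reduce
    rw [if_pos (Nat.zero_le m)]
    exact i0
  · beta_reduce
    rw [if_neg (Nat.not_succ_le_self m)]
    exact ⟨Language.Equiv.refl L B⟩
  · intro i hi
    beta_reduce
    by_cases h : i = m
    · subst h
      rw [if_pos (le_refl i), if_neg (Nat.not_succ_le_self i)]
      exact largeEmb_congr_left ⟨im.symm⟩ h2
    · have h1' : i ≤ m := by omega
      have h2' : i + 1 ≤ m := by omega
      rw [if_pos h1', if_pos h2']
      exact hst i (by omega)

theorem push_chain (hK : ClosedUnderSub K) (hPU : PushUp K) :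
    ∀ n : ℕ, ∀ C D B : StructCat.{x, y, w} L, B ∈ K → LargeEmb K C B → ChainUp K C D n →
    ∃ D' : StructCat.{x, y, w} L, D' ∈ K ∧ LargeEmb K D D' ∧ ChainUp K B D' n := by
  intro n
  induction n with
  | zero =>
    intro C D B hB hCB hCD
    obtain ⟨E, hE, ⟨i0⟩, ⟨i0'⟩, _⟩ := hCD
    exact ⟨B, hB, largeEmb_congr_left ⟨i0'.comp i0.symm⟩ hCB,
      chainUp_of_iso hB ⟨Language.Equiv.refl L B⟩⟩
  | succ k ih =>
    intro C D B hB hCB hCD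
    obtain ⟨E, hE, ⟨i0⟩, ik, hst⟩ := hCD
    have h0B : LargeEmb K (E 0) B := largeEmb_congr_left ⟨i0.symm⟩ hCB
    have h01 : LargeEmb K (E 0) (E 1) := hst 0 (by omega)
    obtain ⟨F, hF, hE1F, hBF⟩ := hPU (E 1) B (hE 1 (by omega)) hB
      ⟨E 0, hE 0 (by omega), h01, h0B⟩
    have tail : ChainUp K (E 1) D k := ⟨fun i => E (i + 1), fun i hi => hE _ (by omega),
      ⟨Language.Equiv.refl L _⟩, ik, fun i hi => hst (i + 1) (by omega)⟩
    obtain ⟨D', hD', hDD', hFD'⟩ := ih (E 1) D F hF hE1F tail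
    exact ⟨D', hD', hDD', chainUp_prepend hK hB hBF hFD'⟩

theorem pushd_chain (hK : ClosedUnderSub K) (hPD : PushDown K) :
    ∀ n : ℕ, ∀ A D B : StructCat.{x, y, w} L, A ∈ K → B ∈ K → LargeEmb K B D → ChainUp K A D n →
    ∃ C' : StructCat.{x, y, w} L, C' ∈ K ∧ LargeEmb K C' A ∧ ChainUp K C' B n := by
  intro n
  induction n with
  | zero =>
    intro A D B hA hB hBD hAD
    obtain ⟨E, hE, ⟨i0⟩, ⟨i0'⟩, _⟩ := hAD
    exact ⟨B, hB, largeEmb_congr_right hK hA ⟨i0.comp i0'.symm⟩ hBD,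
      chainUp_of_iso hB ⟨Language.Equiv.refl L B⟩⟩
  | succ k ih =>
    intro A D B hA hB hBD hAD
    obtain ⟨E, hE, ⟨i0⟩, ik, hst⟩ := hAD
    have tail : ChainUp K (E 1) D k := ⟨fun i => E (i + 1), fun i hi => hE _ (by omega),
      ⟨Language.Equiv.refl L _⟩, ik, fun i hi => hst (i + 1) (by omega)⟩
    obtain ⟨C'', hC'', hC''E1, hC''B⟩ := ih (E 1) D B (hE 1 (by omega)) hB hBD tail
    obtain ⟨C', hC', hC'E0, hC'C''⟩ := hPD (E 0) C'' (hE 0 (by omega)) hC''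
      ⟨E 1, hE 1 (by omega), hst 0 (by omega), hC''E1⟩
    exact ⟨C', hC', largeEmb_congr_right hK hA ⟨i0⟩ hC'E0,
      chainUp_prepend hK hC' hC'C'' hC''B⟩

theorem up_main (hK : ClosedUnderSub K) (hPU : PushUp K) :
    ∀ ℓ : ℕ, ∀ A B : StructCat.{x, y, w} L, A ∈ K → B ∈ K → HasPath K A B ℓ →
    ∃ D : StructCat.{x, y, w} L, D ∈ K ∧ ∃ m n : ℕ, m + n = ℓ ∧ ChainUp K A D m ∧ ChainUp K B D n := by
  intro ℓ
  induction ℓ with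
  | zero =>
    intro A B hA hB hp
    obtain ⟨C, hC, ⟨i0⟩, ⟨i0'⟩, _⟩ := hp
    exact ⟨A, hA, 0, 0, rfl, chainUp_of_iso hA ⟨Language.Equiv.refl L A⟩,
      chainUp_of_iso hB ⟨(i0'.comp i0.symm).symm⟩⟩
  | succ ℓ ih =>
    intro A B hA hB hp
    obtain ⟨C, hC, i0, ⟨iB⟩, hst⟩ := hp
    have hCl : C ℓ ∈ K := hC ℓ (by omega)
    have hCl1 : C (ℓ + 1) ∈ K := hC (ℓ + 1) (by omega)
    have hp' : HasPath K A (C ℓ) ℓ := ⟨C, fun i hi => hC i (by omega), i0,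
      ⟨Language.Equiv.refl L _⟩, fun i hi => hst i (by omega)⟩
    obtain ⟨D, hD, m, n, hmn, hAD, hClD⟩ := ih A (C ℓ) hA hCl hp'
    rcases hst ℓ (by omega) with hup | hdn
    · obtain ⟨D', hD', hDD', hCl1D'⟩ := push_chain hK hPU n (C ℓ) D (C (ℓ + 1)) hCl1 hup hClD
      exact ⟨D', hD', m + 1, n, by omega, chainUp_append hK hAD hDD' hD',
        chainUp_congr_left ⟨iB⟩ hCl1D'⟩
    · exact ⟨D, hD, m, n + 1, by omega, hAD,
        chainUp_congr_left ⟨iB⟩ (chainUp_prepend hK hCl1 hdn hClD)⟩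

theorem down_main (hK : ClosedUnderSub K) (hPD : PushDown K) :
    ∀ ℓ : ℕ, ∀ A B : StructCat.{x, y, w} L, A ∈ K → B ∈ K → HasPath K A B ℓ →
    ∃ C₀ : StructCat.{x, y, w} L, C₀ ∈ K ∧ ∃ m n : ℕ, m + n = ℓ ∧ ChainUp K C₀ A m ∧ ChainUp K C₀ B n := by
  intro ℓ
  induction ℓ with
  | zero =>
    intro A B hA hB hp
    obtain ⟨C, hC, ⟨i0⟩, ⟨i0'⟩, _⟩ := hp
    exact ⟨A, hA, 0, 0, rfl, chainUp_of_iso hA ⟨Language.Equiv.refl L A⟩,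
      chainUp_of_iso hA ⟨i0'.comp i0.symm⟩⟩
  | succ ℓ ih =>
    intro A B hA hB hp
    obtain ⟨C, hC, i0, ⟨iB⟩, hst⟩ := hp
    have hCl : C ℓ ∈ K := hC ℓ (by omega)
    have hCl1 : C (ℓ + 1) ∈ K := hC (ℓ + 1) (by omega)
    have hp' : HasPath K A (C ℓ) ℓ := ⟨C, fun i hi => hC i (by omega), i0,
      ⟨Language.Equiv.refl L _⟩, fun i hi => hst i (by omega)⟩
    obtain ⟨C₀, hC₀, m, n, hmn, hC₀A, hC₀Cl⟩ := ih A (C ℓ) hA hCl hp'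
    rcases hst ℓ (by omega) with hup | hdn
    · exact ⟨C₀, hC₀, m, n + 1, by omega, hC₀A,
        chainUp_congr_right ⟨iB⟩ (chainUp_append hK hC₀Cl hup hCl1)⟩
    · obtain ⟨C', hC', hC'C₀, hC'Cl1⟩ := pushd_chain hK hPD n C₀ (C ℓ) (C (ℓ + 1))
        hC₀ hCl1 hdn hC₀Cl
      exact ⟨C', hC', m + 1, n, by omega, chainUp_prepend hK hC' hC'C₀ hC₀A,
        chainUp_congr_right ⟨iB⟩ hC'Cl1⟩

end StructCat

open StructCat in
/-- let `L` have only function symbols and let `K` be a class of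
`L`-structures closed under substructures, and `A, B ∈ K` with `dis K A B < ∞`.
(1) If `K` has the push-up property, there are `D ∈ K` and `n, m` with `A ⋖^m D`,
`B ⋖^n D` and `dis K A B = n + m`.
(2) If `K` has the push-down property, there are `C ∈ K` and `n, m` with `C ⋖^m A`,
`C ⋖^n B` and `dis K A B = n + m`. -/
theorem push_properties_give_optimal_paths {L : FirstOrder.Language} [L.IsAlgebraic]
    (K : Set (StructCat L)) (hK : ClosedUnderSub K)
    (A B : StructCat L) (hA : A ∈ K) (hB : B ∈ K) (hfin : dis K A B < ⊤) :
    (PushUp K →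
      ∃ D : StructCat L, D ∈ K ∧ ∃ n m : ℕ,
        ChainUp K A D m ∧ ChainUp K B D n ∧ dis K A B = (n : ℕ∞) + (m : ℕ∞)) ∧
    (PushDown K →
      ∃ C : StructCat L, C ∈ K ∧ ∃ n m : ℕ,
        ChainUp K C A m ∧ ChainUp K C B n ∧ dis K A B = (n : ℕ∞) + (m : ℕ∞)) := by
  -- Extract the minimal finite path length.
  have hne : {q : ℕ∞ | ∃ n : ℕ, q = (n : ℕ∞) ∧ HasPath K A B n}.Nonempty := by
    by_contra h
    rw [Set.not_nonempty_iff_eq_empty] at h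
    rw [dis, h, sInf_empty] at hfin
    exact absurd hfin (lt_irrefl _)
  have hTne : {n : ℕ | HasPath K A B n}.Nonempty := by
    obtain ⟨q, n, rfl, hn⟩ := hne
    exact ⟨n, hn⟩
  set n₀ := sInf {n : ℕ | HasPath K A B n} with hn₀def
  have hpath : HasPath K A B n₀ := Nat.sInf_mem hTne
  have hdis : dis K A B = (n₀ : ℕ∞) := by
    apply le_antisymm
    · exact sInf_le ⟨n₀, rfl, hpath⟩
    · apply le_sInf
      rintro q ⟨n, rfl, hn⟩
      exact_mod_cast Nat.sInf_le hn
  constructor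
  · intro hPU
    obtain ⟨D, hD, m, n, hmn, hAD, hBD⟩ := up_main hK hPU n₀ A B hA hB hpath
    refine ⟨D, hD, n, m, hAD, hBD, ?_⟩
    rw [hdis, ← hmn]
    push_cast
    ring
  · intro hPD
    obtain ⟨C, hC, m, n, hmn, hCA, hCB⟩ := down_main hK hPD n₀ A B hA hB hpath
    refine ⟨C, hC, n, m, hCA, hCB, ?_⟩
    rw [hdis, ← hmn]
    push_cast
    ring
end

section
/- If a class K of L-structures is closed under the formation of substructures and has the amalgamation property, then K has the push-up property. -/
open FirstOrder

namespace StructCat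

variable {L : FirstOrder.Language}

/-- `K` has the amalgamation property. -/
def Amalg (K : Set (StructCat L)) : Prop :=
  ∀ A B C : StructCat L, A ∈ K → B ∈ K → C ∈ K →
    ∀ (f : C ↪[L] A) (g : C ↪[L] B),
      ∃ D : StructCat L, D ∈ K ∧ ∃ (f' : A ↪[L] D) (g' : B ↪[L] D),
        f'.comp f = g'.comp g

end StructCat

open FirstOrder.Language in
lemma aux_closure_eq_top {L : FirstOrder.Language} {M : Type*} [L.Structure M]
    (T : L.Substructure M) (s : Set ↥T)
    (h : Substructure.closure L (((↑) : ↥T → M) '' s) = T) :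
    Substructure.closure L s = ⊤ := by
  apply Substructure.map_injective_of_injective (f := T.subtype.toHom)
    T.subtype.injective
  rw [Substructure.map_closure]
  have : ⇑T.subtype.toHom '' s = ((↑) : ↥T → M) '' s := rfl
  rw [this, h, ← Hom.range_eq_map, Substructure.range_subtype]

open StructCat in
/-- if a class `K` of structures over a language with only function
symbols is closed under substructures and has the amalgamation property, then `K`
has the push-up property. -/
theorem pushUp_of_amalgamation {L : FirstOrder.Language} [L.IsAlgebraic]
    (K : Set (StructCat L)) (hK : ClosedUnderSub K) (hAP : Amalg K) :
    PushUp K := by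
  classical
  rintro A B hA hB ⟨C, hC, ⟨S₁, hS₁, ⟨e₁⟩, a, ha⟩, ⟨S₂, hS₂, ⟨e₂⟩, b, hb⟩⟩
  set f : C ↪[L] A := S₁.subtype.comp e₁.toEmbedding with hf
  set g : C ↪[L] B := S₂.subtype.comp e₂.toEmbedding with hg
  obtain ⟨D, hD, f', g', hfg⟩ := hAP A B C hA hB hC f g
  have hfg' : ∀ c : C, f' (f c) = g' (g c) := fun c => DFunLike.congr_fun hfg c
  set T : L.Substructure D :=
    Language.Substructure.closure L (Set.range ⇑f' ∪ {g' b}) with hT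
  have hrf : Set.range ⇑f' ⊆ ↑T :=
    Set.subset_union_left.trans Language.Substructure.subset_closure
  have hgb : g' b ∈ T :=
    Language.Substructure.subset_closure (Set.mem_union_right _ rfl)
  have hS₁im : ⇑f' '' ↑S₁ ⊆ Set.range ⇑g' := by
    rintro _ ⟨x, hx, rfl⟩
    refine ⟨g (e₁.symm ⟨x, hx⟩), ?_⟩
    rw [← hfg']
    simp [hf]
  have hS₂im : ⇑g' '' ↑S₂ ⊆ Set.range ⇑f' := by
    rintro _ ⟨x, hx, rfl⟩
    refine ⟨f (e₂.symm ⟨x, hx⟩), ?_⟩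
    rw [hfg']
    simp [hg]
  have hrgsub : Set.range ⇑g' ⊆ ↑T := by
    have hmap : g'.toHom.range =
        Language.Substructure.map g'.toHom (Language.Substructure.closure L (↑S₂ ∪ {b})) := by
      rw [hb, ← Language.Hom.range_eq_map]
    rw [Language.Substructure.map_closure] at hmap
    have himg : ⇑g'.toHom '' (↑S₂ ∪ {b}) = ⇑g' '' ↑S₂ ∪ {g' b} := by
      rw [Set.image_union, Set.image_singleton]; rfl
    intro x hx
    have hx' : x ∈ g'.toHom.range := ⟨hx.choose, hx.choose_spec⟩
    rw [hmap, himg] at hx'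
    refine Language.Substructure.closure_le.mpr ?_ hx'
    rintro y (hy | hy)
    · exact hrf (hS₂im hy)
    · rw [hy]; exact hgb
  have hfa : f' a ∈ T := hrf ⟨a, rfl⟩
  have hT2 : Language.Substructure.closure L (Set.range ⇑g' ∪ {f' a}) = T := by
    apply le_antisymm
    · apply Language.Substructure.closure_le.mpr
      rintro y (hy | hy)
      · exact hrgsub hy
      · rw [hy]; exact hfa
    · rw [hT]
      apply Language.Substructure.closure_le.mpr
      rintro y (hy | hy)
      · have hmap : f'.toHom.range =
            Language.Substructure.map f'.toHom
              (Language.Substructure.closure L (↑S₁ ∪ {a})) := by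
          rw [ha, ← Language.Hom.range_eq_map]
        rw [Language.Substructure.map_closure] at hmap
        have hy' : y ∈ f'.toHom.range := ⟨hy.choose, hy.choose_spec⟩
        rw [hmap] at hy'
        have himg : ⇑f'.toHom '' (↑S₁ ∪ {a}) = ⇑f' '' ↑S₁ ∪ {f' a} := by
          rw [Set.image_union, Set.image_singleton]; rfl
        rw [himg] at hy'
        refine Language.Substructure.closure_mono ?_ hy'
        rintro z (hz | hz)
        · exact Set.mem_union_left _ (hS₁im hz)
        · exact Set.mem_union_right _ hz
      · rw [hy]
        exact Language.Substructure.subset_closure (Set.mem_union_left _ ⟨b, rfl⟩)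
  -- the push-up structure
  refine ⟨⟨↥T, inferInstance⟩, hK D hD T, ?_, ?_⟩
  · -- A is largely embeddable into T
    set jA : A ↪[L] ↥T := f'.codRestrict T (fun x => hrf ⟨x, rfl⟩) with hjA
    refine ⟨jA.toHom.range, hK _ (hK D hD T) _, ⟨jA.equivRange⟩, ⟨⟨g' b, hgb⟩, ?_⟩⟩
    apply aux_closure_eq_top
    have himg : ((↑) : ↥T → D) '' (↑jA.toHom.range ∪ {⟨g' b, hgb⟩}) =
        Set.range ⇑f' ∪ {g' b} := by
      rw [Set.image_union, Set.image_singleton]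
      congr 1
      ext x
      simp only [Set.mem_image, SetLike.mem_coe, Language.Hom.mem_range, Set.mem_range]
      constructor
      · rintro ⟨y, ⟨c, rfl⟩, rfl⟩
        exact ⟨c, rfl⟩
      · rintro ⟨c, rfl⟩
        exact ⟨jA c, ⟨c, rfl⟩, rfl⟩
    rw [himg, ← hT]
  · -- B is largely embeddable into T
    set jB : B ↪[L] ↥T := g'.codRestrict T (fun x => hrgsub ⟨x, rfl⟩) with hjB
    refine ⟨jB.toHom.range, hK _ (hK D hD T) _, ⟨jB.equivRange⟩, ⟨⟨f' a, hfa⟩, ?_⟩⟩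
    apply aux_closure_eq_top
    have himg : ((↑) : ↥T → D) '' (↑jB.toHom.range ∪ {⟨f' a, hfa⟩}) =
        Set.range ⇑g' ∪ {f' a} := by
      rw [Set.image_union, Set.image_singleton]
      congr 1
      ext x
      simp only [Set.mem_image, SetLike.mem_coe, Language.Hom.mem_range, Set.mem_range]
      constructor
      · rintro ⟨y, ⟨c, rfl⟩, rfl⟩
        exact ⟨c, rfl⟩
      · rintro ⟨c, rfl⟩
        exact ⟨jB c, ⟨c, rfl⟩, rfl⟩
    rw [himg, hT2]
end

section
/- For all monounary algebras A and B: if A is embeddable into B, then MGen(A) ≤ MGen(B) in ℕ ∪ {∞}. -/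
namespace MonoUnary

/-- An embedding of monounary algebras: an injective map commuting with the operations. -/
def Emb (A B : MonoUnary) : Prop :=
  ∃ h : A.carrier → B.carrier, Function.Injective h ∧ ∀ x, h (A.op x) = B.op (h x)

end MonoUnary

/-!
Let `h : A → B` be an embedding and `Y` a finite generating set of `B`. For each `y ∈ Y` whose
orbit meets the image of `h`, pull back the first point of the orbit lying in that image. Every
later point of the orbit inside the image is an iterate of this first one, since `h` is injective
and commutes with the operations; as every `h a` lies on the orbit of some `y ∈ Y`, these at most
`|Y|` pulled-back points generate `A`.
-/

theorem Function.Injective.iterate_sub_eq_of_semiconj {α β : Type*} {f : α → α} {g : β → β}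
    {h : α → β} (hinj : Function.Injective h) (hsc : Function.Semiconj h f g) {y : β}
    {a a' : α} {m n : ℕ} (hmn : m ≤ n) (ha : g^[m] y = h a) (ha' : g^[n] y = h a') :
    f^[n - m] a = a' :=
  hinj <| by
    rw [hsc.iterate_right, ← ha, ← Function.iterate_add_apply, Nat.sub_add_cancel hmn, ha']

namespace MonoUnary

variable {A B : MonoUnary}

theorem MGen_le_card {X : Finset A.carrier} (hX : A.closure ↑X = Set.univ) :
    MGen A ≤ X.card :=
  sInf_le ⟨X, rfl, hX⟩

open Classical in
noncomputable def firstPreimage (h : A.carrier → B.carrier) (y : B.carrier) :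
    Option A.carrier :=
  if hy : ∃ n a, B.op^[n] y = h a then some (Nat.find_spec hy).choose else none

theorem exists_firstPreimage_of_iterate_eq {h : A.carrier → B.carrier}
    (hinj : Function.Injective h) (hsc : ∀ x, h (A.op x) = B.op (h x)) {y : B.carrier}
    {a : A.carrier} {n : ℕ} (hn : B.op^[n] y = h a) :
    ∃ a₀, firstPreimage h y = some a₀ ∧ ∃ k, A.op^[k] a₀ = a := by
  classical
  have hy : ∃ n a, B.op^[n] y = h a := ⟨n, a, hn⟩
  refine ⟨(Nat.find_spec hy).choose, by simp [firstPreimage, hy], n - Nat.find hy, ?_⟩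
  exact hinj.iterate_sub_eq_of_semiconj hsc (Nat.find_le ⟨a, hn⟩)
    (Nat.find_spec hy).choose_spec hn

theorem exists_finset_closure_eq_univ_of_injective {h : A.carrier → B.carrier}
    (hinj : Function.Injective h) (hsc : ∀ x, h (A.op x) = B.op (h x))
    {Y : Finset B.carrier} (hY : B.closure ↑Y = Set.univ) :
    ∃ X : Finset A.carrier, X.card ≤ Y.card ∧ A.closure ↑X = Set.univ := by
  classical
  refine ⟨(Y.image (firstPreimage h)).eraseNone,
    (Finset.card_eraseNone_le _).trans Finset.card_image_le, Set.eq_univ_of_forall fun a => ?_⟩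
  obtain ⟨y, hyY, n, hn⟩ : h a ∈ B.closure ↑Y := hY ▸ Set.mem_univ _
  obtain ⟨a₀, ha₀, k, hk⟩ := exists_firstPreimage_of_iterate_eq hinj hsc hn
  exact ⟨a₀, Finset.mem_eraseNone.2 (ha₀ ▸ Finset.mem_image_of_mem _ hyY), k, hk⟩

end MonoUnary

/-- if `A` is embeddable into `B` then `MGen A ≤ MGen B`. -/
theorem mgen_le_of_emb (A B : MonoUnary) (h : MonoUnary.Emb A B) :
    MonoUnary.MGen A ≤ MonoUnary.MGen B := by
  obtain ⟨h, hinj, hsc⟩ := h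
  refine le_sInf ?_
  rintro _ ⟨Y, rfl, hY⟩
  obtain ⟨X, hcard, hX⟩ := MonoUnary.exists_finset_closure_eq_univ_of_injective hinj hsc hY
  exact (MonoUnary.MGen_le_card hX).trans (by exact_mod_cast hcard)
end

section
/- For every finite group G, the generator distance between G and the trivial group in the class of all groups is at most 3. -/
open CategoryTheory

namespace GrpNetwork

/-- `A` is largely embeddable into `B` in the class of all groups: `B` has a subgroup
`H` isomorphic to `A` such that `H` together with one extra element generates `B`. -/
def LargeEmb (A B : GrpCat.{0}) : Prop :=
  ∃ H : Subgroup B, Nonempty (A ≃* H) ∧ ∃ b : B, Subgroup.closure (↑H ∪ {b}) = ⊤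

/-- A path of length `n` between `A` and `B` in the network of large embeddings of
the class of all groups. -/
def HasPath (A B : GrpCat.{0}) (n : ℕ) : Prop :=
  ∃ C : ℕ → GrpCat.{0}, Nonempty ((C 0) ≃* A) ∧ Nonempty ((C n) ≃* B) ∧
    ∀ i < n, LargeEmb (C i) (C (i + 1)) ∨ LargeEmb (C (i + 1)) (C i)

/-- The generator distance in the class of all groups, in `ℕ ∪ {∞}`. -/
noncomputable def dis (A B : GrpCat.{0}) : ℕ∞ :=
  sInf {q : ℕ∞ | ∃ n : ℕ, q = (n : ℕ∞) ∧ HasPath A B n}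

end GrpNetwork

/-! Embed `G` into `Sym(G ⊔ {∗})` by its Cayley action; the Cayley conjugates of one
transposition through `∗` are all transpositions through `∗`, so one extra generator suffices.
The symmetric group is in turn generated by a full cycle `σ` and one adjacent transposition, and
the cyclic group `⟨σ⟩` is the trivial group plus one generator. This gives the path
`G ⋖ Sym(G ⊔ {∗}) ⋗ ⟨σ⟩ ⋗ 1` of length three. -/

open Equiv Equiv.Perm Subgroup

namespace Equiv.Perm

variable {β : Type*} [DecidableEq β]

theorem closure_range_swap [Finite β] (a : β) : closure (Set.range (swap a)) = ⊤ := by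
  have mem (z : β) : swap a z ∈ closure (Set.range (swap a)) := subset_closure ⟨z, rfl⟩
  rw [eq_top_iff, ← closure_isSwap, closure_le]
  rintro _ ⟨x, y, hxy, rfl⟩
  by_cases hx : a = x
  · exact hx ▸ mem y
  by_cases hy : a = y
  · exact swap_comm x y ▸ hy ▸ mem x
  have hconj := swap_apply_apply (swap a x) a y
  rw [swap_apply_left, swap_apply_of_ne_of_ne (Ne.symm hy) (Ne.symm hxy)] at hconj
  rw [hconj]
  exact mul_mem (mul_mem (mem x) (mem y)) (inv_mem (mem x))

theorem exists_isCycle_support_eq_univ [Fintype β] (h : 2 ≤ Fintype.card β) :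
    ∃ σ : Perm β, σ.IsCycle ∧ σ.support = Finset.univ := by
  have hl : (Finset.univ : Finset β).toList.Nodup := Finset.nodup_toList _
  refine ⟨_, List.isCycle_formPerm hl (by simpa using h), ?_⟩
  rw [List.support_formPerm_of_nodup _ hl, Finset.toList_toFinset]
  intro x hx
  have hcard := congrArg List.length hx
  simp only [Finset.length_toList, Finset.card_univ, List.length_singleton] at hcard
  omega

theorem closure_zpowers_union_swap [Fintype β] {σ : Perm β} (hσ : σ.IsCycle)
    (hσ_supp : σ.support = Finset.univ) (x : β) :
    closure ((zpowers σ : Set (Perm β)) ∪ {swap x (σ x)}) = ⊤ :=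
  top_le_iff.1 <| closure_cycle_adjacent_swap hσ hσ_supp x ▸
    closure_mono (Set.insert_subset (Or.inl (mem_zpowers σ)) (by simp))

end Equiv.Perm

theorem closure_range_toPermHom_option_union_swap (α : Type*) [Group α] [Finite α]
    [DecidableEq α] :
    closure ((MulAction.toPermHom α (Option α)).range ∪ {swap none (some 1)} :
      Set (Perm (Option α))) = ⊤ := by
  set H := closure ((MulAction.toPermHom α (Option α)).range ∪ {swap none (some 1)} :
      Set (Perm (Option α)))
  have hswap : swap none (some 1) ∈ H := subset_closure (Or.inr rfl)
  have hcayley (x : α) : MulAction.toPerm x ∈ H := subset_closure (Or.inl ⟨x, rfl⟩)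
  have hstar : ∀ z : Option α, swap none z ∈ H
    | none => swap_self (none : Option α) ▸ one_mem H
    | some x => by
      have hconj := swap_apply_apply (MulAction.toPerm x : Perm (Option α)) none (some 1)
      simp only [MulAction.toPerm_apply, Option.smul_none, Option.smul_some, smul_eq_mul,
        mul_one] at hconj
      rw [hconj]
      exact mul_mem (mul_mem (hcayley x) hswap) (inv_mem (hcayley x))
  exact top_le_iff.1 <| closure_range_swap (none : Option α) ▸
    (closure_le H).2 (Set.range_subset_iff.2 hstar)

namespace GrpNetwork

theorem dis_le_of_hasPath {A B : GrpCat.{0}} {n : ℕ} (h : HasPath A B n) : dis A B ≤ n :=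
  sInf_le ⟨n, rfl, h⟩

theorem hasPath_of_forall_lt (C : ℕ → GrpCat.{0}) (n : ℕ)
    (h : ∀ i < n, LargeEmb (C i) (C (i + 1)) ∨ LargeEmb (C (i + 1)) (C i)) :
    HasPath (C 0) (C n) n :=
  ⟨C, ⟨.refl _⟩, ⟨.refl _⟩, h⟩

theorem largeEmb_of_injective {α β : Type} [Group α] [Group β] {f : α →* β}
    (hf : Function.Injective f) (b : β) (h : closure ((f.range : Set β) ∪ {b}) = ⊤) :
    LargeEmb (.of α) (.of β) :=
  ⟨f.range, ⟨MonoidHom.ofInjective hf⟩, b, h⟩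

theorem largeEmb_of_closure_union_eq_top {β : Type} [Group β] (H : Subgroup β) (b : β)
    (h : closure ((H : Set β) ∪ {b}) = ⊤) : LargeEmb (.of H) (.of β) :=
  ⟨H, ⟨.refl _⟩, b, h⟩

theorem largeEmb_punit_of_isCyclic (β : Type) [Group β] [IsCyclic β] :
    LargeEmb (.of PUnit) (.of β) := by
  obtain ⟨g, hg⟩ := IsCyclic.exists_generator (α := β)
  refine ⟨⊥, ⟨MulEquiv.ofUnique⟩, g, eq_top_iff.2 fun x _ => ?_⟩
  exact closure_mono Set.subset_union_right (zpowers_eq_closure g ▸ hg x)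

end GrpNetwork

/-- the generator distance between any finite group and the trivial group
in the class of all groups is at most 3. -/
theorem dis_finite_group_trivial_le_three (G : GrpCat.{0}) (hG : Finite G) :
    GrpNetwork.dis G (GrpCat.of PUnit) ≤ 3 := by
  classical
  have : Fintype G := Fintype.ofFinite G
  obtain ⟨σ, hσ, hσ_supp⟩ := exists_isCycle_support_eq_univ (β := Option G)
    (by simp [Nat.one_le_iff_ne_zero, Fintype.card_ne_zero])
  let C : ℕ → GrpCat.{0}
    | 0 => G
    | 1 => .of (Perm (Option G))
    | 2 => .of (zpowers σ)
    | _ => .of PUnit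
  refine GrpNetwork.dis_le_of_hasPath (GrpNetwork.hasPath_of_forall_lt C 3 fun i hi => ?_)
  interval_cases i
  · exact .inl (GrpNetwork.largeEmb_of_injective MulAction.toPerm_injective _
      (closure_range_toPermHom_option_union_swap G))
  · exact .inr (GrpNetwork.largeEmb_of_closure_union_eq_top _ _
      (closure_zpowers_union_swap hσ hσ_supp none))
  · exact .inr (GrpNetwork.largeEmb_punit_of_isCyclic _)
end

section
/- Fix a field F and let K be the class of all F-vector spaces. For all F-vector spaces V and W: dis(V,W) = 0 if V ≅ W; dis(V,W) = |dim(V) − dim(W)| if V and W are both finite-dimensional; and dis(V,W) = ∞ otherwise (i.e., if V ≇ W and not both are finite-dimensional). -/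
/-!
A large embedding `V ⋖ W` means `rank V ≤ rank W ≤ rank V + 1`, and conversely
`rank W = rank V + 1` is realised by one: `W` is a line plus a complement of that line. Hence a path of length `n` from `V` to `W` forces
`rank W ≤ rank V + n` and `rank V ≤ rank W + n`. In finite dimension this gives
`|dim V - dim W| ≤ n`, attained by a chain of coordinate spaces of consecutive dimensions;
in infinite dimension `κ + n = κ`, so all spaces on the path have the same rank and are
isomorphic.
-/

namespace VecNetwork

variable (F : Type) [Field F]

/-- `V` is largely embeddable into `W` in the class of all `F`-vector spaces: `W` has a
subspace `U` isomorphic to `V` such that `U` together with one extra vector spans `W`. -/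
def LargeEmb (V W : ModuleCat.{0} F) : Prop :=
  ∃ U : Submodule F W, Nonempty (V ≃ₗ[F] U) ∧ ∃ w : W, Submodule.span F (↑U ∪ {w}) = ⊤

/-- A path of length `n` between `V` and `W` in the network of large embeddings of the
class of all `F`-vector spaces. -/
def HasPath (V W : ModuleCat.{0} F) (n : ℕ) : Prop :=
  ∃ C : ℕ → ModuleCat.{0} F, Nonempty ((C 0) ≃ₗ[F] V) ∧ Nonempty ((C n) ≃ₗ[F] W) ∧
    ∀ i < n, LargeEmb F (C i) (C (i + 1)) ∨ LargeEmb F (C (i + 1)) (C i)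

/-- The generator distance in the class of all `F`-vector spaces, in `ℕ ∪ {∞}`. -/
noncomputable def dis (V W : ModuleCat.{0} F) : ℕ∞ :=
  sInf {q : ℕ∞ | ∃ n : ℕ, q = (n : ℕ∞) ∧ HasPath F V W n}

end VecNetwork

open Module Cardinal

namespace Cardinal

theorem eq_of_le_add_nat_of_le_add_nat {a b : Cardinal} {n : ℕ} (ha : ℵ₀ ≤ a)
    (hab : a ≤ b + n) (hba : b ≤ a + n) : a = b := by
  have hb : ℵ₀ ≤ b := by
    by_contra! hb
    exact (ha.trans hab).not_gt (add_lt_aleph0 hb (natCast_lt_aleph0))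
  exact le_antisymm (by rwa [add_nat_eq n hb] at hab) (by rwa [add_nat_eq n ha] at hba)

end Cardinal

namespace VecNetwork

variable {F : Type} [Field F]

theorem LargeEmb.rank_le {V W : ModuleCat.{0} F} (h : LargeEmb F V W) :
    Module.rank F V ≤ Module.rank F W ∧ Module.rank F W ≤ Module.rank F V + 1 := by
  obtain ⟨U, ⟨e⟩, w, hw⟩ := h
  have hUw : U ⊔ Submodule.span F {w} = ⊤ := by
    rw [← hw, Submodule.span_union, Submodule.span_eq]
  rw [e.rank_eq]
  refine ⟨U.rank_le, ?_⟩
  calc Module.rank F W = Module.rank F ↥(U ⊔ Submodule.span F {w}) := by rw [hUw, rank_top]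
    _ ≤ Module.rank F U + Module.rank F (Submodule.span F {w}) :=
      Submodule.rank_add_le_rank_add_rank _ _
    _ ≤ Module.rank F U + 1 := by gcongr; exact (rank_span_le _).trans (by simp)

theorem largeEmb_of_rank_eq_add_one {V W : ModuleCat.{0} F}
    (h : Module.rank F W = Module.rank F V + 1) : LargeEmb F V W := by
  obtain ⟨w, hw⟩ : ∃ w : W, w ≠ 0 := by
    rw [← rank_pos_iff_exists_ne_zero (R := F), h]
    exact zero_lt_one.trans_le le_add_self
  obtain ⟨U, hU⟩ := (Submodule.span F {w}).exists_isCompl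
  have hline : Module.rank F (Submodule.span F {w}) = 1 := by
    rw [← finrank_eq_rank, finrank_span_singleton hw, Nat.cast_one]
  have hrank : Module.rank F U + 1 = Module.rank F V + 1 := by
    rw [← h, ← hline, ← (Submodule.quotientEquivOfIsCompl _ _ hU).rank_eq,
      Submodule.rank_quotient_add_rank]
  refine ⟨U, nonempty_linearEquiv_of_rank_eq (add_one_inj.mp hrank).symm, w, ?_⟩
  rw [Submodule.span_union, Submodule.span_eq, sup_comm, hU.sup_eq_top]

theorem HasPath.symm {V W : ModuleCat.{0} F} {n : ℕ} (h : HasPath F V W n) :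
    HasPath F W V n := by
  obtain ⟨C, hC0, hCn, hstep⟩ := h
  have hC0' : Nonempty (C (n - n) ≃ₗ[F] V) := by rwa [Nat.sub_self]
  refine ⟨fun i => C (n - i), by simpa using hCn, hC0', fun i hi => ?_⟩
  have hsucc : n - i = n - (i + 1) + 1 := by omega
  simp only [hsucc]
  exact (hstep (n - (i + 1)) (by omega)).symm

theorem HasPath.rank_le {V W : ModuleCat.{0} F} {n : ℕ} (h : HasPath F V W n) :
    Module.rank F W ≤ Module.rank F V + n := by
  obtain ⟨C, ⟨e0⟩, ⟨en⟩, hstep⟩ := h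
  have hchain : ∀ k ≤ n, Module.rank F (C k) ≤ Module.rank F (C 0) + k := by
    intro k hk
    induction k with
    | zero => simp
    | succ k ih =>
      have hedge : Module.rank F (C (k + 1)) ≤ Module.rank F (C k) + 1 := by
        rcases hstep k (by omega) with h | h
        · exact h.rank_le.2
        · exact h.rank_le.1.trans (self_le_add_right _ _)
      calc Module.rank F (C (k + 1)) ≤ Module.rank F (C 0) + k + 1 := by
            grw [hedge, ih (by omega)]
        _ = Module.rank F (C 0) + ↑(k + 1) := by push_cast; rw [add_assoc]
  simpa [e0.rank_eq, en.rank_eq] using hchain n le_rfl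

theorem HasPath.natAbs_finrank_sub_le {V W : ModuleCat.{0} F} {n : ℕ} (h : HasPath F V W n)
    [FiniteDimensional F V] [FiniteDimensional F W] :
    ((finrank F V : ℤ) - finrank F W).natAbs ≤ n := by
  have hW := h.rank_le
  have hV := h.symm.rank_le
  rw [← finrank_eq_rank, ← finrank_eq_rank] at hW hV
  have : finrank F W ≤ finrank F V + n := by exact_mod_cast hW
  have : finrank F V ≤ finrank F W + n := by exact_mod_cast hV
  omega

theorem HasPath.nonempty_linearEquiv {V W : ModuleCat.{0} F} {n : ℕ} (h : HasPath F V W n)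
    (hV : ¬ FiniteDimensional F V) : Nonempty (V ≃ₗ[F] W) := by
  have hV' : ℵ₀ ≤ Module.rank F V := by
    rwa [← not_lt, rank_lt_aleph0_iff]
  exact nonempty_linearEquiv_of_rank_eq
    (eq_of_le_add_nat_of_le_add_nat hV' h.symm.rank_le h.rank_le)

theorem hasPath_of_finrank_le {V W : ModuleCat.{0} F} [FiniteDimensional F V]
    [FiniteDimensional F W] (h : finrank F V ≤ finrank F W) :
    HasPath F V W (finrank F W - finrank F V) := by
  have hrank : ∀ k, Module.rank F (ModuleCat.of F (Fin k → F)) = k := fun k => rank_fin_fun k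
  refine ⟨fun i => ModuleCat.of F (Fin (finrank F V + i) → F), ?_, ?_, fun i _ => ?_⟩
  · exact nonempty_linearEquiv_of_rank_eq (by rw [hrank, ← finrank_eq_rank]; simp)
  · exact nonempty_linearEquiv_of_rank_eq
      (by rw [hrank, ← finrank_eq_rank, Nat.add_sub_cancel' h])
  · exact Or.inl (largeEmb_of_rank_eq_add_one (by rw [hrank, hrank]; push_cast; rw [add_assoc]))

theorem hasPath_natAbs_finrank_sub (V W : ModuleCat.{0} F) [FiniteDimensional F V]
    [FiniteDimensional F W] : HasPath F V W ((finrank F V : ℤ) - finrank F W).natAbs := by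
  rcases le_total (finrank F V) (finrank F W) with hle | hle
  · rw [show ((finrank F V : ℤ) - finrank F W).natAbs = finrank F W - finrank F V by omega]
    exact hasPath_of_finrank_le hle
  · rw [show ((finrank F V : ℤ) - finrank F W).natAbs = finrank F V - finrank F W by omega]
    exact (hasPath_of_finrank_le hle).symm

theorem dis_le {V W : ModuleCat.{0} F} {n : ℕ} (h : HasPath F V W n) : dis F V W ≤ n :=
  sInf_le ⟨n, rfl, h⟩

theorem le_dis {V W : ModuleCat.{0} F} {m : ℕ∞} (h : ∀ n, HasPath F V W n → m ≤ n) :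
    m ≤ dis F V W :=
  le_sInf fun _ ⟨n, hq, hn⟩ => hq ▸ h n hn

theorem dis_eq_top {V W : ModuleCat.{0} F} (h : ∀ n, ¬ HasPath F V W n) : dis F V W = ⊤ :=
  top_le_iff.mp (le_dis fun n hn => (h n hn).elim)

end VecNetwork

open VecNetwork in
/-- for `F`-vector spaces `V`, `W`: `dis V W = 0` if `V ≅ W`;
`dis V W = |dim V − dim W|` if both are finite dimensional; and `dis V W = ∞`
otherwise (if `V ≇ W` and not both are finite dimensional). -/
theorem dis_of_vector_spaces (F : Type) [Field F] (V W : ModuleCat.{0} F) :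
    (Nonempty (V ≃ₗ[F] W) → dis F V W = 0) ∧
    (FiniteDimensional F V → FiniteDimensional F W →
      dis F V W = (((Module.finrank F V : ℤ) - (Module.finrank F W : ℤ)).natAbs : ℕ∞)) ∧
    (¬ Nonempty (V ≃ₗ[F] W) → ¬ (FiniteDimensional F V ∧ FiniteDimensional F W) →
      dis F V W = ⊤) := by
  refine ⟨fun hVW => ?_, fun hV hW => ?_, fun hVW hfin => ?_⟩
  · exact nonpos_iff_eq_zero.mp (dis_le ⟨fun _ => V, ⟨LinearEquiv.refl F V⟩, hVW, by simp⟩)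
  · exact le_antisymm (dis_le (hasPath_natAbs_finrank_sub V W))
      (le_dis fun n hn => by exact_mod_cast hn.natAbs_finrank_sub_le)
  · refine dis_eq_top fun n hn => ?_
    by_cases hV : FiniteDimensional F V
    · have hW : ¬ FiniteDimensional F W := fun hW => hfin ⟨hV, hW⟩
      exact hVW ⟨(hn.symm.nonempty_linearEquiv hW).some.symm⟩
    · exact hVW (hn.nonempty_linearEquiv hV)
end

section
/- Let K be the class of all finite fields. For all finite fields F_1 and F_2, the generator distance dis(F_1,F_2) in K is finite if and only if F_1 and F_2 have the same characteristic. -/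
/-- Bundled fields. -/
abbrev FieldCat := CategoryTheory.Bundled Field

instance (F : FieldCat) : Field F := F.str

namespace FieldNetwork

/-- `A` is largely embeddable into `B` in the class of all finite fields: `B` has a
(necessarily finite) subfield `S` isomorphic to `A` such that `S` together with one
extra element generates `B`. -/
def LargeEmb (A B : FieldCat.{0}) : Prop :=
  ∃ S : Subfield B, Finite S ∧ Nonempty (A ≃+* S) ∧
    ∃ b : B, Subfield.closure (↑S ∪ {b}) = ⊤

/-- A path of length `n` between `A` and `B` in the network of large embeddings of the
class of all finite fields. -/
def HasPath (A B : FieldCat.{0}) (n : ℕ) : Prop :=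
  ∃ C : ℕ → FieldCat.{0}, (∀ i ≤ n, Finite (C i)) ∧
    Nonempty ((C 0) ≃+* A) ∧ Nonempty ((C n) ≃+* B) ∧
    ∀ i < n, LargeEmb (C i) (C (i + 1)) ∨ LargeEmb (C (i + 1)) (C i)

/-- The generator distance in the class of all finite fields, in `ℕ ∪ {∞}`. -/
noncomputable def dis (A B : FieldCat.{0}) : ℕ∞ :=
  sInf {q : ℕ∞ | ∃ n : ℕ, q = (n : ℕ∞) ∧ HasPath A B n}

end FieldNetwork

/-! Large embeddings are ring embeddings, so they preserve the characteristic, and hence so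
does every path. Conversely, every subfield of a finite field is large by the primitive element
theorem, so the prime field `𝔽_p` is a common large subfield of any two finite fields of
characteristic `p`, which joins them by a path of length two. -/

theorem RingHom.ringChar_eq {K L : Type*} [DivisionRing K] [NonAssocSemiring L] [Nontrivial L]
    (f : K →+* L) : ringChar K = ringChar L := by
  rw [ringChar.eq_iff, f.charP_iff_charP]
  exact ringChar.charP L

theorem Subfield.exists_closure_union_singleton_eq_top {L : Type*} [Field L] [Finite L]
    (S : Subfield L) : ∃ b : L, Subfield.closure (↑S ∪ {b}) = ⊤ := by
  obtain ⟨b, hb⟩ := Field.exists_primitive_element_of_finite_top S L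
  refine ⟨b, ?_⟩
  have h := congrArg IntermediateField.toSubfield hb
  rwa [IntermediateField.adjoin_toSubfield, IntermediateField.top_toSubfield,
    show Set.range (algebraMap S L) = S from Subtype.range_coe] at h

namespace FieldNetwork

theorem LargeEmb.ringChar_eq {A B : FieldCat.{0}} (h : LargeEmb A B) :
    ringChar A = ringChar B := by
  obtain ⟨S, -, ⟨e⟩, -⟩ := h
  exact (S.subtype.comp e.toRingHom).ringChar_eq

theorem largeEmb_of_ringHom {A B : FieldCat.{0}} [Finite B] (f : A →+* B) : LargeEmb A B :=
  ⟨f.fieldRange, inferInstance, ⟨f.rangeRestrictFieldEquiv⟩,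
    f.fieldRange.exists_closure_union_singleton_eq_top⟩

theorem HasPath.ringChar_eq {A B : FieldCat.{0}} {n : ℕ} (h : HasPath A B n) :
    ringChar A = ringChar B := by
  obtain ⟨C, -, ⟨e₀⟩, ⟨eₙ⟩, hstep⟩ := h
  have hC : ∀ i ≤ n, ringChar (C i) = ringChar (C 0) := by
    intro i hi
    induction i with
    | zero => rfl
    | succ j ih =>
      rw [← ih (by omega)]
      rcases hstep j (by omega) with h | h
      · exact h.ringChar_eq.symm
      · exact h.ringChar_eq
  rw [← e₀.toRingHom.ringChar_eq, ← eₙ.toRingHom.ringChar_eq, hC n le_rfl]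

theorem hasPath_two_of_largeEmb {A B Z : FieldCat.{0}} [Finite A] [Finite B] [Finite Z]
    (hA : LargeEmb Z A) (hB : LargeEmb Z B) : HasPath A B 2 := by
  refine ⟨fun | 0 => A | 1 => Z | _ + 2 => B, ?_, ⟨RingEquiv.refl A⟩, ⟨RingEquiv.refl B⟩, ?_⟩
  · rintro (_ | _ | _) - <;> assumption
  · rintro (_ | _ | _) hi
    exacts [Or.inr hA, Or.inl hB, absurd hi (by omega)]

theorem dis_lt_top_iff {A B : FieldCat.{0}} : dis A B < ⊤ ↔ ∃ n, HasPath A B n := by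
  constructor
  · intro h
    obtain ⟨_, ⟨n, rfl, hn⟩, -⟩ := sInf_lt_iff.1 h
    exact ⟨n, hn⟩
  · rintro ⟨n, hn⟩
    have hle : dis A B ≤ n := sInf_le ⟨n, rfl, hn⟩
    exact hle.trans_lt (ENat.natCast_lt_top n)

def primeField (p : ℕ) [Fact p.Prime] : FieldCat.{0} :=
  CategoryTheory.Bundled.of (ZMod p)

instance (p : ℕ) [Fact p.Prime] : Finite (primeField p) :=
  inferInstanceAs (Finite (ZMod p))

theorem largeEmb_primeField {F : FieldCat.{0}} [Finite F] (p : ℕ) [Fact p.Prime] [CharP F p] :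
    LargeEmb (primeField p) F :=
  largeEmb_of_ringHom (ZMod.castHom dvd_rfl F)

end FieldNetwork

/-- two finite fields are at finite generator distance in the class of
all finite fields iff they have the same characteristic. -/
theorem dis_finite_fields_finite_iff_same_char (A B : FieldCat.{0})
    (hA : Finite A) (hB : Finite B) :
    FieldNetwork.dis A B < ⊤ ↔ ringChar A = ringChar B := by
  constructor
  · intro h
    obtain ⟨n, hn⟩ := FieldNetwork.dis_lt_top_iff.1 h
    exact hn.ringChar_eq
  · intro h
    set p := ringChar A
    have : Fact p.Prime := ⟨CharP.char_is_prime A p⟩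
    have : CharP B p := h ▸ ringChar.charP B
    exact FieldNetwork.dis_lt_top_iff.2 ⟨2, FieldNetwork.hasPath_two_of_largeEmb
      (FieldNetwork.largeEmb_primeField p) (FieldNetwork.largeEmb_primeField p)⟩
end
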